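/- arXiv:2004.01337 — 11 statements merged into one kernel-verified Lean document; each statement's English description precedes it below -/
import Mathlib

section
/- Let n ≥ 1 and let x, y be permutations of {1,...,n}. Then x ≤ y in the Bruhat order of the symmetric group S_n if and only if x[i,j] ≤ y[i,j] for all 1 ≤ i, j ≤ n. -/
/-
An ascending transposition `w ↦ w * swap a b` (`a < b`, `w a < w b`) increases `inv`, and it
increases the counts `w[i,j]` by one exactly on the rectangle `a < i ≤ b`, `w a + 1 < j ≤ w b + 1`
(positions `Fin n` are shifted by one); this gives the forward direction. Conversely, if
`x[i,j] ≤ y[i,j]` everywhere and `x ≠ y`, let `a` be the first position where they differ: then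
`x a < y a`, and for the least `b > a` with `x a < x b ≤ y a` the permutation `x * swap a b` is
still dominated by `y`. Each such step strictly increases the sum of all counts, so iterating it
reaches `y`.
-/

/-- For a permutation `w` of `{1,...,n}` (encoded on `Fin n`, with `k : Fin n`
representing the number `k+1`), `entryA w i j = #{1 ≤ k ≤ i : w(k) ≥ j}`. -/
def entryA {n : ℕ} (w : Equiv.Perm (Fin n)) (i j : ℕ) : ℕ :=
  (Finset.univ.filter (fun k : Fin n => (k : ℕ) + 1 ≤ i ∧ j ≤ (w k : ℕ) + 1)).card

/-- `inv(w) = #{1 ≤ i < j ≤ n : w(i) > w(j)}`. -/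
def invA {n : ℕ} (w : Equiv.Perm (Fin n)) : ℕ :=
  (Finset.univ.filter (fun p : Fin n × Fin n => p.1 < p.2 ∧ w p.2 < w p.1)).card

/-- The Bruhat order on `S_n`: the reflexive–transitive closure of
`x → x·t` where `t` is a transposition and `inv(x·t) > inv(x)`. -/
def BruhatA {n : ℕ} (x y : Equiv.Perm (Fin n)) : Prop :=
  Relation.ReflTransGen
    (fun u v => ∃ a b : Fin n, a ≠ b ∧ v = u * Equiv.swap a b ∧ invA u < invA v) x y

section

open Finset Equiv

variable {n : ℕ}

theorem sum_lt_sum_of_add_comp_lt {α M : Type*} [Fintype α] [AddCommMonoid M] [LinearOrder M]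
    [IsOrderedCancelAddMonoid M] (σ : Perm α) {f g : α → M}
    (hle : ∀ p, f p + f (σ p) ≤ g p + g (σ p)) (hlt : ∃ p, f p + f (σ p) < g p + g (σ p)) :
    ∑ p, f p < ∑ p, g p := by
  obtain ⟨p, hp⟩ := hlt
  have h := sum_lt_sum (fun q _ => hle q) ⟨p, mem_univ p, hp⟩
  rw [sum_add_distrib, sum_add_distrib, Equiv.sum_comp σ f, Equiv.sum_comp σ g] at h
  by_contra! hge
  exact h.not_ge (add_le_add hge hge)

theorem entryA_mul_swap (w : Perm (Fin n)) {a b : Fin n} (hab : a < b) (hw : w a < w b)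
    (i j : ℕ) :
    entryA (w * swap a b) i j = entryA w i j +
      if (a : ℕ) + 1 ≤ i ∧ i ≤ b ∧ (w a : ℕ) + 2 ≤ j ∧ j ≤ (w b : ℕ) + 1 then 1 else 0 := by
  have split_ab (F : Fin n → ℕ) : ∑ k, F k = F a + F b + ∑ k ∈ {a, b}ᶜ, F k := by
    rw [← sum_add_sum_compl {a, b}, sum_pair hab.ne]
  simp only [entryA, card_filter]
  rw [split_ab, split_ab]
  have hrest : ∀ k ∈ ({a, b} : Finset (Fin n))ᶜ,
      (if (k : ℕ) + 1 ≤ i ∧ j ≤ ((w * swap a b) k : ℕ) + 1 then 1 else 0) =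
        if (k : ℕ) + 1 ≤ i ∧ j ≤ (w k : ℕ) + 1 then 1 else 0 := by
    intro k hk
    simp only [mem_compl, mem_insert, mem_singleton, not_or] at hk
    rw [Perm.mul_apply, swap_apply_of_ne_of_ne hk.1 hk.2]
  rw [sum_congr rfl hrest]
  simp only [Perm.mul_apply, swap_apply_left, swap_apply_right]
  split_ifs <;> omega

theorem inversion_indicator_add_le (w : Perm (Fin n)) {a b : Fin n} (hab : a < b) (hw : w a < w b)
    (i j : Fin n) :
    (if i < j ∧ w j < w i then 1 else 0) +
        (if swap a b i < swap a b j ∧ w (swap a b j) < w (swap a b i) then 1 else 0) ≤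
      (if i < j ∧ w (swap a b j) < w (swap a b i) then 1 else 0) +
        if swap a b i < swap a b j ∧ w j < w i then (1 : ℕ) else 0 := by
  simp only [swap_apply_def]
  split_ifs <;> subst_vars <;> omega

/- Symmetrising the inversion indicators of `w` and of `w * swap a b` under `swap a b` acting on
both coordinates gives a pointwise inequality, which is strict at the pair `(a, b)`. -/
theorem invA_lt_mul_swap (w : Perm (Fin n)) {a b : Fin n} (hab : a < b) (hw : w a < w b) :
    invA w < invA (w * swap a b) := by
  rw [invA, invA, card_filter, card_filter]
  simp only [Perm.mul_apply]
  refine sum_lt_sum_of_add_comp_lt (M := ℕ) (prodCongr (swap a b) (swap a b)) (fun p => ?_)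
    ⟨(a, b), ?_⟩
  · simp only [prodCongr_apply, Prod.map, swap_apply_self]
    exact inversion_indicator_add_le w hab hw p.1 p.2
  · simp only [prodCongr_apply, Prod.map, swap_apply_left, swap_apply_right]
    split_ifs <;> omega

theorem apply_lt_of_invA_lt_mul_swap {w : Perm (Fin n)} {a b : Fin n} (hab : a < b)
    (h : invA w < invA (w * swap a b)) : w a < w b := by
  by_contra! hba
  have hw : (w * swap a b) a < (w * swap a b) b := by
    simpa using hba.lt_of_ne (w.injective.ne hab.ne')
  have := invA_lt_mul_swap (w * swap a b) hab hw
  rw [mul_assoc, swap_mul_self, mul_one] at this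
  omega

def RankLE (x y : Perm (Fin n)) : Prop :=
  ∀ i j : ℕ, entryA x i j ≤ entryA y i j

theorem rankLE_mul_swap {w : Perm (Fin n)} {a b : Fin n} (hab : a < b) (hw : w a < w b) :
    RankLE w (w * swap a b) := fun i j => by
  rw [entryA_mul_swap w hab hw]
  exact Nat.le_add_right _ _

theorem RankLE.trans {x y z : Perm (Fin n)} (hxy : RankLE x y) (hyz : RankLE y z) :
    RankLE x z := fun i j => (hxy i j).trans (hyz i j)

theorem rankLE_of_bruhatA {x y : Perm (Fin n)} (h : BruhatA x y) : RankLE x y := by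
  induction h with
  | refl => exact fun _ _ => le_rfl
  | tail _ hstep ih =>
    obtain ⟨a, b, hne, rfl, hinv⟩ := hstep
    rcases hne.lt_or_gt with hab | hba
    · exact ih.trans (rankLE_mul_swap hab (apply_lt_of_invA_lt_mul_swap hab hinv))
    · rw [swap_comm] at hinv ⊢
      exact ih.trans (rankLE_mul_swap hba (apply_lt_of_invA_lt_mul_swap hba hinv))

def tailCount (w : Perm (Fin n)) (a : Fin n) (i j : ℕ) : ℕ :=
  #{k | a < k ∧ (k : ℕ) + 1 ≤ i ∧ j ≤ (w k : ℕ) + 1}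

theorem entryA_eq_add_tailCount (w : Perm (Fin n)) (a : Fin n) {i : ℕ} (hi : (a : ℕ) + 1 ≤ i)
    (j : ℕ) :
    entryA w i j = entryA w a j + (if j ≤ (w a : ℕ) + 1 then 1 else 0) + tailCount w a i j := by
  have hk (k : Fin n) : (if (k : ℕ) + 1 ≤ i ∧ j ≤ (w k : ℕ) + 1 then 1 else 0) =
      (if (k : ℕ) + 1 ≤ a ∧ j ≤ (w k : ℕ) + 1 then 1 else 0) +
        (if k = a then if j ≤ (w a : ℕ) + 1 then 1 else 0 else 0) +
        (if a < k ∧ (k : ℕ) + 1 ≤ i ∧ j ≤ (w k : ℕ) + 1 then 1 else 0) := by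
    by_cases hka : k = a
    · subst hka
      simp only [lt_self_iff_false, false_and, if_false]
      split_ifs <;> omega
    · have hka' : (k : ℕ) ≠ a := Fin.val_ne_of_ne hka
      simp only [hka, if_false, Fin.lt_def]
      split_ifs <;> omega
  simp only [entryA, tailCount, card_filter, sum_congr rfl fun k _ => hk k, sum_add_distrib,
    sum_ite_eq', mem_univ, if_true]

theorem tailCount_succ_self (w : Perm (Fin n)) (a : Fin n) (j : ℕ) :
    tailCount w a (a + 1) j = 0 := by
  simp only [tailCount, card_eq_zero, filter_eq_empty_iff]
  omega

section FirstDifference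

variable {x y : Perm (Fin n)} {a : Fin n}

theorem entryA_eq_of_forall_lt (hagree : ∀ k < a, x k = y k) (j : ℕ) :
    entryA x a j = entryA y a j := by
  simp only [entryA]
  congr 1
  refine filter_congr fun k _ => ?_
  constructor <;> rintro ⟨hk, hj⟩ <;> refine ⟨hk, ?_⟩
  · rwa [← hagree k (by omega)]
  · rwa [hagree k (by omega)]

theorem apply_lt_of_rankLE (H : RankLE x y) (hagree : ∀ k < a, x k = y k) (hne : x a ≠ y a) :
    x a < y a := by
  have h := H (a + 1) (x a + 1)
  rw [entryA_eq_add_tailCount x a le_rfl, entryA_eq_add_tailCount y a le_rfl,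
    entryA_eq_of_forall_lt hagree, tailCount_succ_self, tailCount_succ_self] at h
  refine lt_of_le_of_ne ?_ hne
  split_ifs at h <;> omega

/- Below `a` the counts of `x` and `y` agree, position `a` counts for `y` but not for `x`, and
between `a` and `b` no value of `x` lies in `(x a, y a]`, so the dominance at column `y a + 2`
transfers to column `j`. -/
theorem entryA_lt_of_rankLE (H : RankLE x y) (hagree : ∀ k < a, x k = y k) {b : Fin n}
    (hby : x b ≤ y a) (hmin : ∀ k < b, ¬(a < k ∧ x a < x k ∧ x k ≤ y a))
    {i j : ℕ} (hi : (a : ℕ) + 1 ≤ i) (hib : i ≤ b) (hj : (x a : ℕ) + 2 ≤ j)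
    (hjb : j ≤ (x b : ℕ) + 1) :
    entryA x i j < entryA y i j := by
  have hcut := H i (y a + 2)
  have htail_x : tailCount x a i j = tailCount x a i (y a + 2) := by
    simp only [tailCount]
    congr 1
    refine filter_congr fun k _ => ?_
    by_cases hk : a < k ∧ (k : ℕ) + 1 ≤ i
    · have := hmin k (by omega)
      simp only [hk, true_and]
      omega
    · tauto
  have htail_y : tailCount y a i (y a + 2) ≤ tailCount y a i j := by
    refine card_le_card fun k => ?_
    simp only [mem_filter, mem_univ, true_and]
    omega
  rw [entryA_eq_add_tailCount x a hi, entryA_eq_add_tailCount y a hi,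
    entryA_eq_of_forall_lt hagree] at hcut ⊢
  split_ifs at hcut ⊢ <;> omega

end FirstDifference

theorem exists_rankLE_mul_swap {x y : Perm (Fin n)} (H : RankLE x y) (hxy : x ≠ y) :
    ∃ a b : Fin n, a < b ∧ x a < x b ∧ RankLE (x * swap a b) y := by
  obtain ⟨a, hne, hagree⟩ : ∃ a, x a ≠ y a ∧ ∀ k < a, x k = y k := by
    obtain ⟨a, ha⟩ := exists_minimal_of_wellFoundedLT (fun k => x k ≠ y k)
      (by by_contra! h; exact hxy (Equiv.ext h))
    rw [minimal_iff_forall_lt] at ha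
    exact ⟨a, ha.1, fun k hk => not_not.mp (ha.2 hk)⟩
  have hxa := apply_lt_of_rankLE H hagree hne
  have hpos : a < x.symm (y a) := by
    rcases lt_trichotomy (x.symm (y a)) a with h | h | h
    · have hy := hagree _ h
      rw [apply_symm_apply] at hy
      exact absurd (y.injective hy) h.ne'
    · exact absurd ((x.apply_symm_apply (y a)).symm.trans (congrArg x h)).symm hne
    · exact h
  obtain ⟨b, hb⟩ := exists_minimal_of_wellFoundedLT (fun k => a < k ∧ x a < x k ∧ x k ≤ y a)
    ⟨_, hpos, by rwa [apply_symm_apply], by rw [apply_symm_apply]⟩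
  rw [minimal_iff_forall_lt] at hb
  obtain ⟨⟨hab, hxab, hby⟩, hmin⟩ := hb
  refine ⟨a, b, hab, hxab, fun i j => ?_⟩
  rw [entryA_mul_swap x hab hxab]
  split_ifs with h
  · exact entryA_lt_of_rankLE H hagree hby hmin h.1 h.2.1 h.2.2.1 h.2.2.2
  · exact H i j

def rankSum (w : Perm (Fin n)) : ℕ :=
  ∑ p ∈ range (n + 1) ×ˢ range (n + 1), entryA w p.1 p.2

theorem RankLE.rankSum_le {x y : Perm (Fin n)} (h : RankLE x y) : rankSum x ≤ rankSum y :=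
  sum_le_sum fun p _ => h p.1 p.2

theorem rankSum_lt_mul_swap (w : Perm (Fin n)) {a b : Fin n} (hab : a < b) (hw : w a < w b) :
    rankSum w < rankSum (w * swap a b) := by
  refine sum_lt_sum (fun p _ => rankLE_mul_swap hab hw p.1 p.2) ⟨(a + 1, w a + 2), ?_, ?_⟩
  · simp only [mem_product, mem_range]
    omega
  · rw [entryA_mul_swap w hab hw]
    split_ifs <;> omega

theorem bruhatA_of_rankLE {x y : Perm (Fin n)} (h : RankLE x y) : BruhatA x y := by
  induction hm : rankSum y - rankSum x using Nat.strong_induction_on generalizing x with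
  | _ m ih =>
    by_cases hxy : x = y
    · exact hxy ▸ .refl
    obtain ⟨a, b, hab, hxab, hle⟩ := exists_rankLE_mul_swap h hxy
    have hup := rankSum_lt_mul_swap x hab hxab
    have hdown := hle.rankSum_le
    exact .head ⟨a, b, hab.ne, rfl, invA_lt_mul_swap x hab hxab⟩ (ih _ (by omega) hle rfl)

theorem entryA_eq_zero (w : Perm (Fin n)) {i j : ℕ} (h : min i n = 0 ∨ n < max j 1) :
    entryA w i j = 0 := by
  simp only [entryA, card_eq_zero, filter_eq_empty_iff]
  omega

theorem entryA_min_max (w : Perm (Fin n)) (i j : ℕ) :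
    entryA w i j = entryA w (min i n) (max j 1) := by
  simp only [entryA]
  congr 1
  refine filter_congr fun k _ => ?_
  omega

theorem rankLE_iff_bounded {x y : Perm (Fin n)} :
    RankLE x y ↔
      ∀ i j : ℕ, 1 ≤ i → i ≤ n → 1 ≤ j → j ≤ n → entryA x i j ≤ entryA y i j := by
  refine ⟨fun h i j _ _ _ _ => h i j, fun h i j => ?_⟩
  by_cases h0 : min i n = 0 ∨ n < max j 1
  · rw [entryA_eq_zero x h0]
    exact Nat.zero_le _
  · rw [entryA_min_max x, entryA_min_max y]
    exact h _ _ (by omega) (by omega) (by omega) (by omega)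

end

theorem stmt0_general (n : ℕ) (x y : Equiv.Perm (Fin n)) :
    BruhatA x y ↔
      ∀ i j : ℕ, 1 ≤ i → i ≤ n → 1 ≤ j → j ≤ n → entryA x i j ≤ entryA y i j :=
  (⟨rankLE_of_bruhatA, bruhatA_of_rankLE⟩ : BruhatA x y ↔ RankLE x y).trans rankLE_iff_bounded

/-- for `n ≥ 1` and permutations `x, y` of `{1,...,n}`,
`x ≤ y` in Bruhat order iff `x[i,j] ≤ y[i,j]` for all `1 ≤ i, j ≤ n`. -/
theorem stmt0 (n : ℕ) (hn : 1 ≤ n) (x y : Equiv.Perm (Fin n)) :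
    BruhatA x y ↔
      ∀ i j : ℕ, 1 ≤ i → i ≤ n → 1 ≤ j → j ≤ n → entryA x i j ≤ entryA y i j :=
  stmt0_general n x y
end

section
/- Let n ≥ 1 and let x, y be signed permutations of rank n. If x ≤^D y, then x[i,j] ≤ y[i,j] for all −n ≤ i, j ≤ n. -/
/-!
Over pairs `1 ≤ p < q ≤ n`, `ℓ_D(w)` counts the inversions `w p > w q` and the negative-sum
pairs `w p + w q < 0`. A D-reflection `t` is a product of two commuting transpositions,
`(a b)(−b −a)` or `(−b a)(−a b)` with `1 ≤ a < b ≤ n`. If `ℓ_D(u t) > ℓ_D(u)`, then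
`u a < u b`, resp. `u a + u b > 0`: otherwise, matching each pair of positions with its image
under `(a b)`, every matched couple of pairs contributes to `ℓ_D(u t)` at most what it contributes
to `ℓ_D(u)`. So both transpositions move a larger value of `u` to a later position, and such a
move can only increase the counts `u[i,j]`.
-/

/-- A signed permutation of rank `n`, encoded as a permutation of `ℤ` which is odd
(`w(−k) = −w(k)`) and fixes every `k` with `|k| > n`. -/
def IsSignedPerm (n : ℕ) (w : Equiv.Perm ℤ) : Prop :=
  (∀ k : ℤ, w (-k) = -(w k)) ∧ (∀ k : ℤ, (n : ℤ) < |k| → w k = k)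

/-- `w[i,j] = #{k : −n ≤ k ≤ i, k ≠ 0, w(k) ≥ j}`. -/
noncomputable def entryB (n : ℕ) (w : Equiv.Perm ℤ) (i j : ℤ) : ℕ :=
  ((Finset.Icc (-(n : ℤ)) i).filter (fun k => k ≠ 0 ∧ j ≤ w k)).card

/-- `ℓ_D(w) = #{1 ≤ i < j ≤ n : w(i) > w(j)} + Σ_{1 ≤ i ≤ n, w(i) < 0} (|w(i)| − 1)`. -/
noncomputable def lD (n : ℕ) (w : Equiv.Perm ℤ) : ℕ :=
  (((Finset.Icc (1 : ℤ) (n : ℤ)) ×ˢ (Finset.Icc (1 : ℤ) (n : ℤ))).filter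
      (fun p => p.1 < p.2 ∧ w p.2 < w p.1)).card +
    ∑ i ∈ (Finset.Icc (1 : ℤ) (n : ℤ)).filter (fun i => w i < 0), ((w i).natAbs - 1)

/-- A D-reflection: exchanges `i ↔ j` and `−i ↔ −j`, or `i ↔ −j` and `−i ↔ j`
(some `1 ≤ i < j ≤ n`), fixing all other points. -/
def IsDReflection (n : ℕ) (t : Equiv.Perm ℤ) : Prop :=
  (∃ i j : ℤ, 1 ≤ i ∧ i < j ∧ j ≤ (n : ℤ) ∧
    t i = j ∧ t j = i ∧ t (-i) = -j ∧ t (-j) = -i ∧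
    ∀ k : ℤ, k ≠ i → k ≠ j → k ≠ -i → k ≠ -j → t k = k) ∨
  (∃ i j : ℤ, 1 ≤ i ∧ i < j ∧ j ≤ (n : ℤ) ∧
    t i = -j ∧ t (-j) = i ∧ t (-i) = j ∧ t j = -i ∧
    ∀ k : ℤ, k ≠ i → k ≠ j → k ≠ -i → k ≠ -j → t k = k)

/-- The order `≤^D`: reflexive–transitive closure of `x → x·t`, `t` a D-reflection
with `ℓ_D(x·t) > ℓ_D(x)`. -/
def BruhatD (n : ℕ) (x y : Equiv.Perm ℤ) : Prop :=
  Relation.ReflTransGen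
    (fun u v => ∃ t : Equiv.Perm ℤ,
      IsSignedPerm n t ∧ IsDReflection n t ∧ v = u * t ∧ lD n u < lD n v) x y


open Finset Equiv

theorem Finset.sum_le_sum_of_involution {ι M : Type*} [AddCommMonoid M] [LinearOrder M]
    [IsOrderedCancelAddMonoid M] {s : Finset ι} {f g : ι → M} (m : ι → ι)
    (hm : ∀ x ∈ s, m x ∈ s) (hmm : ∀ x ∈ s, m (m x) = x)
    (h : ∀ x ∈ s, f x + f (m x) ≤ g x + g (m x)) : ∑ x ∈ s, f x ≤ ∑ x ∈ s, g x := by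
  have hsum : ∀ φ : ι → M, ∑ x ∈ s, φ (m x) = ∑ x ∈ s, φ x := fun φ =>
    sum_nbij' m m hm hm hmm hmm fun _ _ => rfl
  have hle := sum_le_sum h
  rw [sum_add_distrib, sum_add_distrib, hsum, hsum] at hle
  by_contra! hlt
  exact (add_lt_add hlt hlt).not_ge hle

theorem Equiv.swap_apply_mem {α : Type*} [DecidableEq α] {s : Finset α} {a b k : α}
    (ha : a ∈ s) (hb : b ∈ s) (hk : k ∈ s) : swap a b k ∈ s := by
  rw [swap_apply_def]
  split_ifs <;> assumption

def pairLen (r s : ℤ) : ℕ := (if s < r then 1 else 0) + (if r + s < 0 then 1 else 0)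

noncomputable def posPairs (n : ℕ) : Finset (ℤ × ℤ) :=
  {x ∈ Icc (1 : ℤ) n ×ˢ Icc (1 : ℤ) n | x.1 < x.2}

namespace IsSignedPerm

variable {n : ℕ} {w : Perm ℤ}

theorem map_zero (h : IsSignedPerm n w) : w 0 = 0 := by
  have h0 := h.1 0
  rw [neg_zero] at h0
  omega

theorem mul {v : Perm ℤ} (hw : IsSignedPerm n w) (hv : IsSignedPerm n v) :
    IsSignedPerm n (w * v) :=
  ⟨fun k => by simp only [Perm.mul_apply, hv.1 k, hw.1 (v k)],
    fun k hk => by simp only [Perm.mul_apply, hv.2 k hk, hw.2 k hk]⟩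

theorem map_add_ne_zero (h : IsSignedPerm n w) {r s : ℤ} (hrs : r ≠ -s) : w r + w s ≠ 0 :=
  fun e => hrs (w.injective (by rw [h.1 s]; omega))

theorem natAbs_mem_Icc (h : IsSignedPerm n w) {k : ℤ} (hk : k ∈ Icc (1 : ℤ) n) :
    (w k).natAbs ∈ Icc 1 n := by
  rw [mem_Icc] at hk ⊢
  have hne : w k ≠ 0 := fun e => by
    have := w.injective (e.trans h.map_zero.symm)
    omega
  refine ⟨by omega, ?_⟩
  by_contra hlt
  have hfix := w.injective (h.2 (w k) (by rw [Int.abs_eq_natAbs]; omega))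
  omega

theorem natAbs_injOn (h : IsSignedPerm n w) :
    Set.InjOn (fun k => (w k).natAbs) (Set.Ici 1) := by
  intro p hp q hq e
  simp only [Set.mem_Ici] at hp hq
  rcases Int.natAbs_eq_natAbs_iff.1 e with e | e
  · exact w.injective e
  · have := w.injective (e.trans (h.1 q).symm)
    omega

theorem image_natAbs (h : IsSignedPerm n w) :
    (Icc (1 : ℤ) n).image (fun k => (w k).natAbs) = Icc 1 n := by
  refine eq_of_subset_of_card_le (image_subset_iff.2 fun k hk => h.natAbs_mem_Icc hk) ?_
  rw [card_image_of_injOn (h.natAbs_injOn.mono fun k hk => (mem_Icc.1 hk).1), Nat.card_Icc,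
    Int.card_Icc]
  omega

theorem card_natAbs_lt (h : IsSignedPerm n w) {i : ℤ} (hi : i ∈ Icc (1 : ℤ) n) :
    #{q ∈ Icc (1 : ℤ) n | (w q).natAbs < (w i).natAbs} = (w i).natAbs - 1 := by
  have hle := mem_Icc.1 (h.natAbs_mem_Icc hi)
  rw [← card_image_of_injOn (h.natAbs_injOn.mono fun k hk => (mem_Icc.1 (mem_filter.1 hk).1).1),
    ← filter_image (p := (· < (w i).natAbs)), h.image_natAbs, ← Nat.card_Ico]
  congr 1
  ext m
  simp only [mem_filter, mem_Icc, mem_Ico]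
  omega

-- Each negative-sum pair is counted at its entry of larger absolute value, which is negative.
theorem card_negSumPairs (h : IsSignedPerm n w) :
    #{x ∈ posPairs n | w x.1 + w x.2 < 0} =
      ∑ i ∈ Icc (1 : ℤ) n with w i < 0, ((w i).natAbs - 1) := by
  have hsort : #{x ∈ posPairs n | w x.1 + w x.2 < 0} =
      #{x ∈ Icc (1 : ℤ) n ×ˢ Icc (1 : ℤ) n | w x.1 < 0 ∧ (w x.2).natAbs < (w x.1).natAbs} := by
    refine card_nbij' (fun x => if (w x.2).natAbs < (w x.1).natAbs then x else x.swap)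
      (fun x => if x.1 < x.2 then x else x.swap) ?_ ?_ ?_ ?_
    · rintro ⟨p, q⟩ hx
      simp only [posPairs, mem_coe, mem_filter, mem_product, mem_Icc] at hx ⊢
      have hne : (w p).natAbs ≠ (w q).natAbs := fun e =>
        hx.1.2.ne (h.natAbs_injOn (Set.mem_Ici.2 hx.1.1.1.1) (Set.mem_Ici.2 hx.1.1.2.1) e)
      split_ifs <;> simp only [Prod.swap] <;> omega
    · rintro ⟨p, q⟩ hx
      simp only [posPairs, mem_coe, mem_filter, mem_product, mem_Icc] at hx ⊢
      have hne : p ≠ q := by rintro rfl; omega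
      split_ifs <;> simp only [Prod.swap] <;> omega
    · rintro ⟨p, q⟩ hx
      simp only [posPairs, mem_coe, mem_filter] at hx
      by_cases hpq : (w q).natAbs < (w p).natAbs
      · simp [hpq, hx.1.2]
      · simp [hpq, hx.1.2.not_gt]
    · rintro ⟨p, q⟩ hx
      simp only [mem_coe, mem_filter] at hx
      by_cases hpq : p < q
      · simp [hpq, hx.2.2]
      · simp [hpq, hx.2.2.not_gt]
  rw [hsort, card_filter, sum_product, sum_filter]
  refine sum_congr rfl fun i hi => ?_
  split_ifs with hneg
  · simp only [hneg, true_and, ← card_filter, h.card_natAbs_lt hi]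
  · simp [hneg]

theorem lD_eq_sum_pairLen (h : IsSignedPerm n w) :
    lD n w = ∑ x ∈ posPairs n, pairLen (w x.1) (w x.2) := by
  rw [lD, ← h.card_negSumPairs]
  simp only [pairLen, sum_add_distrib, ← card_filter, posPairs, filter_filter]

end IsSignedPerm

def pairImage (σ : Perm ℤ) (x : ℤ × ℤ) : ℤ × ℤ :=
  if σ x.1 < σ x.2 then (σ x.1, σ x.2) else (σ x.2, σ x.1)

theorem pairImage_pairImage {σ : Perm ℤ} (hσ : Function.Involutive σ) {x : ℤ × ℤ}
    (hx : x.1 < x.2) : pairImage σ (pairImage σ x) = x := by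
  obtain ⟨p, q⟩ := x
  by_cases h : σ p < σ q
  · simp [pairImage, h, hσ p, hσ q, hx]
  · simp [pairImage, h, hσ p, hσ q, hx.not_gt]

theorem pairImage_mem_posPairs {n : ℕ} {σ : Perm ℤ}
    (hσ : ∀ k ∈ Icc (1 : ℤ) n, σ k ∈ Icc (1 : ℤ) n) {x : ℤ × ℤ} (hx : x ∈ posPairs n) :
    pairImage σ x ∈ posPairs n := by
  simp only [posPairs, mem_filter, mem_product] at hx ⊢
  have hne : σ x.1 ≠ σ x.2 := σ.injective.ne hx.2.ne
  unfold pairImage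
  split_ifs
  · exact ⟨⟨hσ _ hx.1.1, hσ _ hx.1.2⟩, by assumption⟩
  · exact ⟨⟨hσ _ hx.1.2, hσ _ hx.1.1⟩, by omega⟩

def matchedPairLen (σ : Perm ℤ) (w : ℤ → ℤ) (x : ℤ × ℤ) : ℕ :=
  pairLen (w x.1) (w x.2) + pairLen (w (pairImage σ x).1) (w (pairImage σ x).2)

theorem lD_le_of_matchedPairLen_le {n : ℕ} {u v σ : Perm ℤ} (hu : IsSignedPerm n u)
    (hv : IsSignedPerm n v) (hσ : Function.Involutive σ)
    (hσI : ∀ k ∈ Icc (1 : ℤ) n, σ k ∈ Icc (1 : ℤ) n)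
    (h : ∀ p q : ℤ, 1 ≤ p → p < q → matchedPairLen σ v (p, q) ≤ matchedPairLen σ u (p, q)) :
    lD n v ≤ lD n u := by
  rw [hu.lD_eq_sum_pairLen, hv.lD_eq_sum_pairLen]
  refine sum_le_sum_of_involution (pairImage σ) (fun x => pairImage_mem_posPairs hσI)
    (fun x hx => pairImage_pairImage hσ (mem_filter.1 hx).2) fun ⟨p, q⟩ hx => ?_
  simp only [posPairs, mem_filter, mem_product, mem_Icc] at hx
  exact h p q hx.1.1.1 hx.2

theorem pairLen_neg_left (r s : ℤ) : pairLen (-r) s = pairLen r s := by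
  unfold pairLen; split_ifs <;> omega

theorem pairLen_le_of_lt {A B : ℤ} (h : B < A) : pairLen B A ≤ pairLen A B := by
  unfold pairLen; split_ifs <;> omega

theorem pairLen_add_le_of_lt {A B : ℤ} (h : B < A) (K : ℤ) :
    pairLen B K + pairLen K A ≤ pairLen A K + pairLen K B := by
  unfold pairLen; split_ifs <;> omega

theorem pairLen_neg_le_of_add_neg {A B : ℤ} (h : A + B < 0) :
    pairLen (-B) (-A) ≤ pairLen A B := by
  unfold pairLen; split_ifs <;> omega

theorem pairLen_neg_add_le_of_add_neg {A B : ℤ} (h : A + B < 0) (K : ℤ) :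
    pairLen (-B) K + pairLen K (-A) ≤ pairLen A K + pairLen K B := by
  unfold pairLen; split_ifs <;> omega

theorem pairLen_add_neg_le_of_add_neg {A B : ℤ} (h : A + B < 0) (K : ℤ) :
    pairLen K (-A) + pairLen K (-B) ≤ pairLen K A + pairLen K B := by
  unfold pairLen; split_ifs <;> omega

-- Only pairs meeting `{a, b}` change: `{a, b}` is matched with itself and `{k, a}` with
-- `{k, b}`; the cases `k < a`, `a < k < b`, `b < k` each reduce to one of the inequalities above.
theorem matchedPairLen_le_of_lt {u v : ℤ → ℤ} {a b : ℤ} (hab : a < b) (hdesc : u b < u a)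
    (hva : v a = u b) (hvb : v b = u a) (hv : ∀ k, 1 ≤ k → k ≠ a → k ≠ b → v k = u k)
    {p q : ℤ} (hp : 1 ≤ p) (hpq : p < q) :
    matchedPairLen (swap a b) v (p, q) ≤ matchedPairLen (swap a b) u (p, q) := by
  have hself := add_le_add (pairLen_le_of_lt hdesc) (pairLen_le_of_lt hdesc)
  have hmidp := pairLen_add_le_of_lt hdesc (u p)
  have hmidq := pairLen_add_le_of_lt hdesc (u q)
  unfold matchedPairLen pairImage
  by_cases hpa : p = a <;> by_cases hpb : p = b <;> by_cases hqa : q = a <;>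
    by_cases hqb : q = b <;>
    simp (disch := omega) only [hpa, hpb, hqa, hqb, swap_apply_left, swap_apply_right,
      swap_apply_of_ne_of_ne] at hmidp hmidq ⊢ <;> split_ifs <;>
    simp (disch := omega) only [hva, hvb, hv] at hmidp hmidq ⊢ <;> omega

theorem matchedPairLen_le_of_add_neg {u v : ℤ → ℤ} {a b : ℤ} (hab : a < b)
    (hdesc : u a + u b < 0) (hva : v a = -u b) (hvb : v b = -u a)
    (hv : ∀ k, 1 ≤ k → k ≠ a → k ≠ b → v k = u k)
    {p q : ℤ} (hp : 1 ≤ p) (hpq : p < q) :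
    matchedPairLen (swap a b) v (p, q) ≤ matchedPairLen (swap a b) u (p, q) := by
  have hself := add_le_add (pairLen_neg_le_of_add_neg hdesc) (pairLen_neg_le_of_add_neg hdesc)
  have hmidp := pairLen_neg_add_le_of_add_neg hdesc (u p)
  have hmidq := pairLen_neg_add_le_of_add_neg hdesc (u q)
  have hlowp := pairLen_add_neg_le_of_add_neg hdesc (u p)
  have hlowq := pairLen_add_neg_le_of_add_neg hdesc (u q)
  unfold matchedPairLen pairImage
  by_cases hpa : p = a <;> by_cases hpb : p = b <;> by_cases hqa : q = a <;>
    by_cases hqb : q = b <;>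
    simp (disch := omega) only [hpa, hpb, hqa, hqb, swap_apply_left, swap_apply_right,
      swap_apply_of_ne_of_ne] at hmidp hmidq hlowp hlowq ⊢ <;> split_ifs <;>
    simp (disch := omega) only [hva, hvb, hv, pairLen_neg_left]
      at hself hmidp hmidq hlowp hlowq ⊢ <;> omega

theorem IsDReflection.exists_eq_swap_mul_swap {n : ℕ} {t : Perm ℤ} (h : IsDReflection n t) :
    ∃ a b : ℤ, 1 ≤ a ∧ a < b ∧ b ≤ n ∧
      (t = swap a b * swap (-b) (-a) ∨ t = swap (-b) a * swap (-a) b) := by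
  rcases h with ⟨a, b, ha, hab, hbn, h1, h2, h3, h4, hfix⟩ |
    ⟨a, b, ha, hab, hbn, h1, h2, h3, h4, hfix⟩
  all_goals refine ⟨a, b, ha, hab, hbn, ?_⟩
  on_goal 1 => left
  on_goal 2 => right
  all_goals
    ext k
    simp only [Perm.mul_apply, swap_apply_def]
    by_cases hk : k = a ∨ k = b ∨ k = -a ∨ k = -b
    · rcases hk with rfl | rfl | rfl | rfl <;> simp only [h1, h2, h3, h4] <;> split_ifs <;> omega
    · push Not at hk
      rw [hfix k hk.1 hk.2.1 hk.2.2.1 hk.2.2.2]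
      split_ifs <;> omega

theorem lD_mul_swap_mul_swap_le_of_lt {n : ℕ} {u : Perm ℤ} (hu : IsSignedPerm n u) {a b : ℤ}
    (ha : 1 ≤ a) (hab : a < b) (hbn : b ≤ n) (ht : IsSignedPerm n (swap a b * swap (-b) (-a)))
    (hdesc : u b < u a) : lD n (u * (swap a b * swap (-b) (-a))) ≤ lD n u := by
  refine lD_le_of_matchedPairLen_le hu (hu.mul ht) (σ := swap a b) (swap_apply_self a b)
    (fun k => swap_apply_mem (by simp; omega) (by simp; omega)) fun p q hp hpq =>
      matchedPairLen_le_of_lt hab hdesc ?_ ?_ (fun k hk hka hkb => ?_) hp hpq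
  all_goals simp (disch := omega) only [Perm.mul_apply, swap_apply_of_ne_of_ne, swap_apply_left,
    swap_apply_right]

theorem lD_mul_swap_neg_mul_swap_neg_le_of_add_neg {n : ℕ} {u : Perm ℤ} (hu : IsSignedPerm n u)
    {a b : ℤ} (ha : 1 ≤ a) (hab : a < b) (hbn : b ≤ n)
    (ht : IsSignedPerm n (swap (-b) a * swap (-a) b))
    (hdesc : u a + u b < 0) : lD n (u * (swap (-b) a * swap (-a) b)) ≤ lD n u := by
  refine lD_le_of_matchedPairLen_le hu (hu.mul ht) (σ := swap a b) (swap_apply_self a b)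
    (fun k => swap_apply_mem (by simp; omega) (by simp; omega)) fun p q hp hpq =>
      matchedPairLen_le_of_add_neg hab hdesc ?_ ?_ (fun k hk hka hkb => ?_) hp hpq
  all_goals simp (disch := omega) only [Perm.mul_apply, swap_apply_of_ne_of_ne, swap_apply_right,
    hu.1]

theorem entryB_le_mul_swap {n : ℕ} (u : Perm ℤ) {p q : ℤ} (hp : -(n : ℤ) ≤ p) (hp0 : p ≠ 0)
    (hq0 : q ≠ 0) (hpq : p < q) (hu : u p < u q) (i j : ℤ) :
    entryB n u i j ≤ entryB n (u * swap p q) i j := by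
  unfold entryB
  by_cases hqi : q ≤ i
  · refine (card_equiv (swap p q) fun k => ?_).le
    rw [mem_filter, mem_filter]
    simp only [mem_Icc, Perm.mul_apply, swap_apply_self]
    rcases eq_or_ne k p with rfl | hkp
    · rw [swap_apply_left]; omega
    rcases eq_or_ne k q with rfl | hkq
    · rw [swap_apply_right]; omega
    · rw [swap_apply_of_ne_of_ne hkp hkq]
  · refine card_le_card fun k hk => ?_
    rw [mem_filter] at hk ⊢
    simp only [mem_Icc, Perm.mul_apply] at hk ⊢
    rcases eq_or_ne k p with rfl | hkp
    · rw [swap_apply_left]; omega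
    · rwa [swap_apply_of_ne_of_ne hkp (by omega)]

theorem entryB_le_mul_of_lD_lt {n : ℕ} {u t : Perm ℤ} (hu : IsSignedPerm n u)
    (ht : IsSignedPerm n t) (hrefl : IsDReflection n t) (hlen : lD n u < lD n (u * t))
    (i j : ℤ) : entryB n u i j ≤ entryB n (u * t) i j := by
  obtain ⟨a, b, ha, hab, hbn, rfl | rfl⟩ := hrefl.exists_eq_swap_mul_swap
  · have hup : u a < u b := by
      by_contra! hdesc
      have hne : u a ≠ u b := u.injective.ne hab.ne
      exact hlen.not_ge (lD_mul_swap_mul_swap_le_of_lt hu ha hab hbn ht (by omega))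
    calc entryB n u i j ≤ entryB n (u * swap a b) i j :=
          entryB_le_mul_swap u (by omega) (by omega) (by omega) hab hup i j
      _ ≤ entryB n (u * swap a b * swap (-b) (-a)) i j :=
          entryB_le_mul_swap _ (by omega) (by omega) (by omega) (by omega) (by
            simp (disch := omega) only [Perm.mul_apply, swap_apply_of_ne_of_ne, hu.1]; omega) i j
      _ = entryB n (u * (swap a b * swap (-b) (-a))) i j := by rw [mul_assoc]
  · have hup : 0 < u a + u b := by
      by_contra! hdesc
      have hne : u a + u b ≠ 0 := hu.map_add_ne_zero (by omega)
      exact hlen.not_ge (lD_mul_swap_neg_mul_swap_neg_le_of_add_neg hu ha hab hbn ht (by omega))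
    calc entryB n u i j ≤ entryB n (u * swap (-b) a) i j :=
          entryB_le_mul_swap u (by omega) (by omega) (by omega) (by omega) (by rw [hu.1]; omega) i j
      _ ≤ entryB n (u * swap (-b) a * swap (-a) b) i j :=
          entryB_le_mul_swap _ (by omega) (by omega) (by omega) (by omega) (by
            simp (disch := omega) only [Perm.mul_apply, swap_apply_of_ne_of_ne, hu.1]; omega) i j
      _ = entryB n (u * (swap (-b) a * swap (-a) b)) i j := by rw [mul_assoc]

theorem stmt2_general (n : ℕ) (x y : Equiv.Perm ℤ)
    (hx : IsSignedPerm n x) (hxy : BruhatD n x y) :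
    ∀ i j : ℤ, -(n : ℤ) ≤ i → i ≤ (n : ℤ) → -(n : ℤ) ≤ j → j ≤ (n : ℤ) →
      entryB n x i j ≤ entryB n y i j := by
  suffices IsSignedPerm n y ∧ ∀ i j, entryB n x i j ≤ entryB n y i j from
    fun i j _ _ _ _ => this.2 i j
  induction hxy with
  | refl => exact ⟨hx, fun _ _ => le_rfl⟩
  | tail _ hstep ih =>
    obtain ⟨t, ht, hrefl, rfl, hlen⟩ := hstep
    exact ⟨ih.1.mul ht, fun i j =>
      (ih.2 i j).trans (entryB_le_mul_of_lD_lt ih.1 ht hrefl hlen i j)⟩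

/-- for signed permutations `x, y` of rank `n ≥ 1`, if `x ≤^D y`
then `x[i,j] ≤ y[i,j]` for all `−n ≤ i, j ≤ n`. -/
theorem stmt2 (n : ℕ) (hn : 1 ≤ n) (x y : Equiv.Perm ℤ)
    (hx : IsSignedPerm n x) (hy : IsSignedPerm n y) (hxy : BruhatD n x y) :
    ∀ i j : ℤ, -(n : ℤ) ≤ i → i ≤ (n : ℤ) → -(n : ℤ) ≤ j → j ≤ (n : ℤ) →
      entryB n x i j ≤ entryB n y i j :=
  stmt2_general n x y hx hxy
end

section
/- Let n ≥ 1 and let x, y be signed permutations of rank n. If x ≤^D y, then x ≤^B y. -/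
/-- `ℓ_B(w) = #{1 ≤ i < j ≤ n : w(i) > w(j)} + Σ_{1 ≤ i ≤ n, w(i) < 0} |w(i)|`. -/
noncomputable def lB (n : ℕ) (w : Equiv.Perm ℤ) : ℕ :=
  (((Finset.Icc (1 : ℤ) (n : ℤ)) ×ˢ (Finset.Icc (1 : ℤ) (n : ℤ))).filter
      (fun p => p.1 < p.2 ∧ w p.2 < w p.1)).card +
    ∑ i ∈ (Finset.Icc (1 : ℤ) (n : ℤ)).filter (fun i => w i < 0), (w i).natAbs

/-- A B-reflection: a D-reflection, or an exchange `i ↔ −i` (some `1 ≤ i ≤ n`)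
fixing all other points. -/
def IsBReflection (n : ℕ) (t : Equiv.Perm ℤ) : Prop :=
  IsDReflection n t ∨
  (∃ i : ℤ, 1 ≤ i ∧ i ≤ (n : ℤ) ∧ t i = -i ∧ t (-i) = i ∧
    ∀ k : ℤ, k ≠ i → k ≠ -i → t k = k)

/-- The Bruhat order `≤^B`. -/
def BruhatB (n : ℕ) (x y : Equiv.Perm ℤ) : Prop :=
  Relation.ReflTransGen
    (fun u v => ∃ t : Equiv.Perm ℤ,
      IsSignedPerm n t ∧ IsBReflection n t ∧ v = u * t ∧ lB n u < lB n v) x y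

/-!
Write `ℓ_B = ℓ_D + neg`, where `neg w` counts the negative entries among `w(1), …, w(n)`; it
suffices to show that a D-reflection `t` with `ℓ_D(ut) > ℓ_D(u)` does not decrease `neg`.
A transposition `i ↔ j` only permutes the entries, and `i ↔ -j` replaces `u(i), u(j)` by
`-u(j), -u(i)`, so `neg` drops only if `u(i), u(j) < 0`. That case is excluded because the
reverse move, from `a = u(i) > 0`, `b = u(j) > 0`, raises `ℓ_D`: the negative part grows by
`(a - 1) + (b - 1)`, while each lost inversion `(i, k)` or `(j, k)` yields the value `u(k)`
resp. `-u(k)`, and these are distinct elements of `(-b, a) \ {0, b, -a}`, a set of size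
`a + b - 3`.
-/

open Finset

lemma Finset.sum_add_pair_eq_of_eqOn {α M : Type*} [DecidableEq α] [AddCommMonoid M]
    {s : Finset α} {f g : α → M} {i j : α} (hi : i ∈ s) (hj : j ∈ s) (hij : i ≠ j)
    (h : ∀ k ∈ s, k ≠ i → k ≠ j → f k = g k) :
    ∑ k ∈ s, f k + (g i + g j) = ∑ k ∈ s, g k + (f i + f j) := by
  have split : ∀ φ : α → M, ∑ k ∈ s, φ k = φ i + φ j + ∑ k ∈ (s.erase j).erase i, φ k := by
    intro φ
    rw [← add_sum_erase s φ hj, ← add_sum_erase _ φ (mem_erase.2 ⟨hij, hi⟩)]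
    abel
  have rest : ∑ k ∈ (s.erase j).erase i, f k = ∑ k ∈ (s.erase j).erase i, g k := by
    refine sum_congr rfl fun k hk => ?_
    obtain ⟨hki, hk⟩ := mem_erase.1 hk
    obtain ⟨hkj, hk⟩ := mem_erase.1 hk
    exact h k hk hki hkj
  rw [split f, split g, rest]
  abel

namespace SignedPerm

section Odd

variable {u : Equiv.Perm ℤ}

lemma apply_ne_neg_apply (hu : Function.Odd u) {k l : ℤ} (hk : 0 < k) (hl : 0 < l) :
    u k ≠ -u l := fun h => by
  have := u.injective (h.trans (hu l).symm)
  omega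

lemma apply_ne_zero (hu : Function.Odd u) {k : ℤ} (hk : k ≠ 0) : u k ≠ 0 :=
  fun h => hk (u.injective (h.trans hu.map_zero.symm))

end Odd

variable (n : ℕ)

noncomputable def invCount (w : Equiv.Perm ℤ) : ℕ :=
  #((Icc 1 (n : ℤ) ×ˢ Icc 1 (n : ℤ)).filter (fun p => p.1 < p.2 ∧ w p.2 < w p.1))

noncomputable def negSum (w : Equiv.Perm ℤ) : ℕ := ∑ k ∈ Icc 1 (n : ℤ), (-w k - 1).toNat

noncomputable def negCount (w : Equiv.Perm ℤ) : ℕ :=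
  ∑ k ∈ Icc 1 (n : ℤ), if w k < 0 then 1 else 0

lemma lD_eq (w : Equiv.Perm ℤ) : lD n w = invCount n w + negSum n w := by
  rw [lD, negSum, sum_filter]
  congr 1
  refine sum_congr rfl fun k _ => ?_
  split_ifs <;> omega

lemma lB_eq (w : Equiv.Perm ℤ) : lB n w = lD n w + negCount n w := by
  rw [lB, lD_eq, negSum, negCount, sum_filter, add_assoc, ← sum_add_distrib]
  congr 1
  refine sum_congr rfl fun k _ => ?_
  split_ifs <;> omega

/-- The `k` for which the inversion `(i, k)` of `u` is lost when `u(i), u(j)` are replaced by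
`-u(j), -u(i)`. -/
noncomputable def lossSet (u : Equiv.Perm ℤ) (i j : ℤ) : Finset ℤ :=
  (Icc 1 (n : ℤ)).filter (fun k => i < k ∧ k ≠ j ∧ -u j ≤ u k ∧ u k < u i)

variable {n} {u w : Equiv.Perm ℤ} {i j : ℤ}

lemma lt_or_mem_lossSet (hij : i < j) (hwi : w i = -u j) (hwj : w j = -u i)
    (hrest : ∀ k ∈ Icc 1 (n : ℤ), k ≠ i → k ≠ j → w k = u k) (ha : 0 < u i) (hb : 0 < u j)
    {p q : ℤ} (hp : p ∈ Icc 1 (n : ℤ)) (hq : q ∈ Icc 1 (n : ℤ)) (hpq : p < q) (huqp : u q < u p) :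
    w q < w p ∨ (p = i ∧ q ∈ lossSet n u i j) ∨ (p = j ∧ q ∈ lossSet n u j i) := by
  by_cases hqi : q = i
  · subst hqi
    rw [hrest p hp (by omega) (by omega)]
    omega
  by_cases hqj : q = j
  · subst hqj
    by_cases hpi : p = i
    · subst hpi; omega
    · rw [hrest p hp hpi (by omega)]; omega
  rw [hrest q hq hqi hqj]
  by_cases hpi : p = i
  · subst hpi
    by_cases hlow : u q < -u j
    · omega
    · exact Or.inr (Or.inl ⟨rfl, mem_filter.2 ⟨hq, hpq, hqj, by omega, huqp⟩⟩)
  by_cases hpj : p = j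
  · subst hpj
    by_cases hlow : u q < -u i
    · omega
    · exact Or.inr (Or.inr ⟨rfl, mem_filter.2 ⟨hq, hpq, hqi, by omega, huqp⟩⟩)
  rw [hrest p hp hpi hpj]
  exact Or.inl huqp

lemma invCount_le_add_card_lossSet (hij : i < j) (hwi : w i = -u j) (hwj : w j = -u i)
    (hrest : ∀ k ∈ Icc 1 (n : ℤ), k ≠ i → k ≠ j → w k = u k) (ha : 0 < u i) (hb : 0 < u j) :
    invCount n u ≤ invCount n w + (#(lossSet n u i j) + #(lossSet n u j i)) := by
  set invW := (Icc 1 (n : ℤ) ×ˢ Icc 1 (n : ℤ)).filter (fun p => p.1 < p.2 ∧ w p.2 < w p.1)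
  have hsub : (Icc 1 (n : ℤ) ×ˢ Icc 1 (n : ℤ)).filter (fun p => p.1 < p.2 ∧ u p.2 < u p.1) ⊆
      invW ∪ (lossSet n u i j).image (i, ·) ∪ (lossSet n u j i).image (j, ·) := by
    rintro ⟨p, q⟩ hpq
    obtain ⟨hpq, hlt, huqp⟩ := mem_filter.1 hpq
    obtain ⟨hp, hq⟩ := mem_product.1 hpq
    rcases lt_or_mem_lossSet hij hwi hwj hrest ha hb hp hq hlt huqp with h | ⟨rfl, h⟩ | ⟨rfl, h⟩
    · exact mem_union_left _ (mem_union_left _ (mem_filter.2 ⟨hpq, hlt, h⟩))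
    · exact mem_union_left _ (mem_union_right _ (mem_image_of_mem _ h))
    · exact mem_union_right _ (mem_image_of_mem _ h)
  calc invCount n u
      ≤ #(invW ∪ (lossSet n u i j).image (i, ·) ∪ (lossSet n u j i).image (j, ·)) :=
        card_le_card hsub
    _ ≤ #invW + #((lossSet n u i j).image (i, ·)) + #((lossSet n u j i).image (j, ·)) :=
        (card_union_le _ _).trans (Nat.add_le_add_right (card_union_le _ _) _)
    _ ≤ invCount n w + (#(lossSet n u i j) + #(lossSet n u j i)) := by
        have := card_image_le (s := lossSet n u i j) (f := (i, ·))
        have := card_image_le (s := lossSet n u j i) (f := (j, ·))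
        have : #invW = invCount n w := rfl
        omega

lemma card_lossSet_add_card_lossSet_le (hu : Function.Odd u) (hi : 1 ≤ i) (hij : i < j)
    (ha : 0 < u i) (hb : 0 < u j) :
    (#(lossSet n u i j) + #(lossSet n u j i) : ℤ) ≤ u i + u j - 3 := by
  have hval : ∀ k, 0 < k → k ≠ i → k ≠ j →
      u k ≠ 0 ∧ u k ≠ u i ∧ u k ≠ -u i ∧ u k ≠ u j ∧ u k ≠ -u j := fun k hk hki hkj =>
    ⟨apply_ne_zero hu hk.ne', fun h => hki (u.injective h),
      apply_ne_neg_apply hu hk (by omega), fun h => hkj (u.injective h),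
      apply_ne_neg_apply hu hk (by omega)⟩
  set U₁ := (lossSet n u i j).map u.toEmbedding
  set U₂ := (lossSet n u j i).map (u.trans (Equiv.neg ℤ)).toEmbedding
  have hdisj : Disjoint U₁ U₂ := by
    simp only [U₁, U₂, disjoint_left, mem_map, Equiv.coe_toEmbedding, Equiv.trans_apply,
      Equiv.neg_apply]
    rintro _ ⟨k, hk, rfl⟩ ⟨l, hl, hkl⟩
    exact apply_ne_neg_apply hu (mem_Icc.1 (mem_filter.1 hk).1).1
      (mem_Icc.1 (mem_filter.1 hl).1).1 hkl.symm
  have hsub : ∀ v ∈ U₁ ∪ U₂, v ∈ Ioo (-u j) (u i) ∧ v ≠ 0 ∧ v ≠ u j ∧ v ≠ -u i := by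
    simp only [U₁, U₂, mem_union, mem_map, Equiv.coe_toEmbedding, Equiv.trans_apply,
      Equiv.neg_apply, lossSet, mem_filter, mem_Icc, mem_Ioo]
    rintro _ (⟨k, ⟨⟨hk, -⟩, hik, hkj, hlo, hhi⟩, rfl⟩ | ⟨k, ⟨⟨hk, -⟩, hjk, -, hlo, hhi⟩, rfl⟩)
    · have := hval k (by omega) (by omega) hkj
      omega
    · have := hval k (by omega) (by omega) (by omega)
      omega
  have hne : u i ≠ u j := fun h => hij.ne (u.injective h)
  obtain ⟨c, hc, hc0, hcU⟩ : ∃ c ∈ Ioo (-u j) (u i), c ≠ 0 ∧ ∀ v ∈ U₁ ∪ U₂, v ≠ c := by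
    rcases hne.lt_or_gt with h | h
    · exact ⟨-u i, mem_Ioo.2 ⟨by omega, by omega⟩, by omega, fun v hv => (hsub v hv).2.2.2⟩
    · exact ⟨u j, mem_Ioo.2 ⟨by omega, by omega⟩, by omega, fun v hv => (hsub v hv).2.2.1⟩
  have hcard := card_le_card (s := U₁ ∪ U₂) (t := ((Ioo (-u j) (u i)).erase 0).erase c)
    fun v hv => mem_erase.2 ⟨hcU v hv, mem_erase.2 ⟨(hsub v hv).2.1, (hsub v hv).1⟩⟩
  rw [card_union_of_disjoint hdisj, card_map, card_map,
    card_erase_of_mem (mem_erase.2 ⟨hc0, hc⟩), card_erase_of_mem (mem_Ioo.2 ⟨by omega, ha⟩),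
    Int.card_Ioo] at hcard
  omega

lemma negSum_eq_add (hi : 1 ≤ i) (hij : i < j) (hjn : j ≤ n) (hwi : w i = -u j)
    (hwj : w j = -u i) (hrest : ∀ k ∈ Icc 1 (n : ℤ), k ≠ i → k ≠ j → w k = u k)
    (ha : 0 < u i) (hb : 0 < u j) :
    negSum n w = negSum n u + ((u i - 1).toNat + (u j - 1).toNat) := by
  have h := sum_add_pair_eq_of_eqOn (f := fun k => (-w k - 1).toNat)
    (g := fun k => (-u k - 1).toNat) (mem_Icc.2 ⟨hi, by omega⟩) (mem_Icc.2 ⟨by omega, hjn⟩)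
    hij.ne fun k hk hki hkj => by rw [hrest k hk hki hkj]
  simp only [hwi, hwj, neg_neg] at h
  rw [negSum, negSum]
  omega

lemma lD_lt_of_pos (hu : Function.Odd u) (hi : 1 ≤ i) (hij : i < j) (hjn : j ≤ n)
    (hwi : w i = -u j) (hwj : w j = -u i)
    (hrest : ∀ k ∈ Icc 1 (n : ℤ), k ≠ i → k ≠ j → w k = u k) (ha : 0 < u i) (hb : 0 < u j) :
    lD n u < lD n w := by
  have hinv := invCount_le_add_card_lossSet hij hwi hwj hrest ha hb
  have hloss := card_lossSet_add_card_lossSet_le (n := n) hu hi hij ha hb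
  rw [lD_eq, lD_eq, negSum_eq_add hi hij hjn hwi hwj hrest ha hb]
  omega

lemma _root_.IsDReflection.exists_pair {t : Equiv.Perm ℤ} (ht : IsDReflection n t) :
    ∃ i j : ℤ, 1 ≤ i ∧ i < j ∧ j ≤ n ∧ (∀ k, 0 < k → k ≠ i → k ≠ j → t k = k) ∧
      (t i = j ∧ t j = i ∨ t i = -j ∧ t j = -i) := by
  rcases ht with ⟨i, j, hi, hij, hjn, hti, htj, -, -, hfix⟩ |
    ⟨i, j, hi, hij, hjn, hti, -, -, htj, hfix⟩
  · exact ⟨i, j, hi, hij, hjn, fun k hk hki hkj => hfix k hki hkj (by omega) (by omega),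
      Or.inl ⟨hti, htj⟩⟩
  · exact ⟨i, j, hi, hij, hjn, fun k hk hki hkj => hfix k hki hkj (by omega) (by omega),
      Or.inr ⟨hti, htj⟩⟩

lemma lB_lt_of_lD_lt {t : Equiv.Perm ℤ} (hu : Function.Odd u) (ht : Function.Odd t)
    (htD : IsDReflection n t) (hlen : lD n u < lD n (u * t)) : lB n u < lB n (u * t) := by
  suffices negCount n u ≤ negCount n (u * t) by rw [lB_eq, lB_eq]; omega
  obtain ⟨i, j, hi, hij, hjn, hfix, hswap⟩ := htD.exists_pair
  have hrest : ∀ k ∈ Icc 1 (n : ℤ), k ≠ i → k ≠ j → (u * t) k = u k := fun k hk hki hkj => by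
    rw [Equiv.Perm.mul_apply, hfix k (mem_Icc.1 hk).1 hki hkj]
  have h := sum_add_pair_eq_of_eqOn (f := fun k => if (u * t) k < 0 then 1 else 0)
    (g := fun k => if u k < 0 then 1 else 0) (mem_Icc.2 ⟨hi, by omega⟩)
    (mem_Icc.2 ⟨by omega, hjn⟩) hij.ne fun k hk hki hkj => by rw [hrest k hk hki hkj]
  rw [← negCount, ← negCount] at h
  rcases hswap with ⟨hti, htj⟩ | ⟨hti, htj⟩
  · simp only [Equiv.Perm.mul_apply, hti, htj] at h
    split_ifs at h <;> omega
  have hwi : (u * t) i = -u j := by rw [Equiv.Perm.mul_apply, hti, hu]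
  have hwj : (u * t) j = -u i := by rw [Equiv.Perm.mul_apply, htj, hu]
  -- `u` is obtained from `u * t` by the same move, with positive entries at `i, j`.
  have hpos : ¬ (u i < 0 ∧ u j < 0) := fun ⟨hai, hbj⟩ => hlen.not_gt <|
    lD_lt_of_pos (hu.comp_odd ht) hi hij hjn (by rw [hwj, neg_neg]) (by rw [hwi, neg_neg])
      (fun k hk hki hkj => (hrest k hk hki hkj).symm) (by omega) (by omega)
  have hui : u i ≠ 0 := apply_ne_zero hu (by omega)
  have huj : u j ≠ 0 := apply_ne_zero hu (by omega)
  simp only [hwi, hwj] at h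
  split_ifs at h <;> omega

end SignedPerm

theorem stmt3_general (n : ℕ) (x y : Equiv.Perm ℤ)
    (hx : IsSignedPerm n x) (hxy : BruhatD n x y) :
    BruhatB n x y := by
  suffices ∀ v, BruhatD n x v → Function.Odd v ∧ BruhatB n x v from (this y hxy).2
  intro v hv
  induction hv with
  | refl => exact ⟨hx.1, .refl⟩
  | tail _ hstep ih =>
    obtain ⟨t, ht, htD, rfl, hlen⟩ := hstep
    exact ⟨ih.1.comp_odd ht.1,
      ih.2.tail ⟨t, ht, Or.inl htD, rfl, SignedPerm.lB_lt_of_lD_lt ih.1 ht.1 htD hlen⟩⟩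

/-- for signed permutations `x, y` of rank `n ≥ 1`,
if `x ≤^D y` then `x ≤^B y`. -/
theorem stmt3 (n : ℕ) (hn : 1 ≤ n) (x y : Equiv.Perm ℤ)
    (hx : IsSignedPerm n x) (hy : IsSignedPerm n y) (hxy : BruhatD n x y) :
    BruhatB n x y :=
  stmt3_general n x y hx hxy
end

section
/- Let α = (α_1 ≥ ⋯ ≥ α_l > 0) be a partition of n, let w ∈ C_α, and let 0 ≤ m ≤ n. Then w[n−m, n−m+1] ≥ min{k : α_1 + ⋯ + α_k ≥ m}. -/
/-- `w ∈ C_α` for a partition `α = (α 1 ≥ ⋯ ≥ α ℓ > 0)` of `n`: `w` is a signed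
permutation of rank `n` and there is a decomposition `{1,...,n} = I_1 ⊔ ⋯ ⊔ I_ℓ`
with `|I_j| = α_j`, such that the orbits of `w` on `{±1,...,±n}` are exactly the
sets `I_j ⊔ (−I_j)`. -/
def MemCClass (n ℓ : ℕ) (α : ℕ → ℕ) (w : Equiv.Perm ℤ) : Prop :=
  IsSignedPerm n w ∧
  ∃ I : ℕ → Finset ℤ,
    (∀ j, 1 ≤ j → j ≤ ℓ → (I j).card = α j) ∧
    (∀ j j', 1 ≤ j → j < j' → j' ≤ ℓ → Disjoint (I j) (I j')) ∧
    ((Finset.Icc 1 ℓ).biUnion I = Finset.Icc (1 : ℤ) (n : ℤ)) ∧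
    (∀ j, 1 ≤ j → j ≤ ℓ →
      ∀ x ∈ I j ∪ (I j).image (fun a => -a), ∀ y : ℤ,
        (w.SameCycle x y ↔ y ∈ I j ∪ (I j).image (fun a => -a)))

/-! Let `T = (n - m, n]`. If a block `I_j` meets `T` in `t`, its orbit `I_j ∪ -I_j` also
contains `-t ∉ T`, so it enters `T` at some step `k ↦ w k` with `k ∉ T`, i.e. `k ≤ n - m`;
these `k` are distinct for distinct blocks and are all counted by `w[n - m, n - m + 1]`.
On the other hand the blocks meeting `T` cover `T`, so their sizes add up to at least `m`,
and since `α` is decreasing, any `r` of the blocks have total size at most `α_1 + ⋯ + α_r`. -/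

open Finset Equiv

theorem Equiv.Perm.SameCycle.exists_notMem_apply_mem {β : Type*} {f : Perm β}
    {s : Finset β} {x y : β} (h : f.SameCycle x y) (hx : x ∈ s) (hy : y ∉ s) :
    ∃ z ∉ s, f z ∈ s := by
  by_contra! hs
  have hinv : Set.SurjOn f.symm s s :=
    surjOn_of_injOn_of_card_le f.symm (fun u hu => by_contra fun h' => hs _ h' (by simpa using hu))
      f.symm.injective.injOn le_rfl
  have hf : ∀ z, f z ∈ s ↔ z ∈ s := fun z =>
    ⟨fun hz => by_contra fun h' => hs z h' hz, fun hz => by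
      obtain ⟨u, hu, rfl⟩ := hinv hz
      simpa using hu⟩
  obtain ⟨k, rfl⟩ := h
  exact hy (by simpa using ((f.subtypePerm hf ^ k) ⟨x, hx⟩).2)

theorem Finset.sum_le_sum_Icc_card {M : Type*} [AddCommMonoid M] [PartialOrder M]
    [IsOrderedAddMonoid M] {f : ℕ → M} {ℓ : ℕ} (hf : AntitoneOn f (Set.Icc 1 ℓ))
    {J : Finset ℕ} (hJ : J ⊆ Icc 1 ℓ) : ∑ j ∈ J, f j ≤ ∑ i ∈ Icc 1 #J, f i := by
  induction J using Finset.induction_on_max with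
  | empty => simp
  | insert a s hlt ih =>
    have ha := mem_Icc.1 (hJ (mem_insert_self a s))
    have hs : s ⊆ Icc 1 ℓ := (subset_insert a s).trans hJ
    have hcard : #s + 1 ≤ a := by
      have : s ⊆ Ico 1 a := fun x hx => mem_Ico.2 ⟨(mem_Icc.1 (hs hx)).1, hlt x hx⟩
      have := card_le_card this
      simp only [Nat.card_Ico] at this
      omega
    rw [sum_insert fun h => (hlt a h).false, card_insert_of_notMem fun h => (hlt a h).false,
      sum_Icc_succ_top (by omega), add_comm]
    exact add_le_add (ih hs) (hf ⟨by omega, by omega⟩ ⟨ha.1.trans' (by omega), ha.2⟩ hcard)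

theorem mem_union_image_neg {I : Finset ℤ} {x : ℤ} :
    x ∈ I ∪ I.image (fun a => -a) ↔ x ∈ I ∨ -x ∈ I := by
  simp [neg_eq_iff_eq_neg]

theorem exists_lt_le_apply_of_orbit {w : Perm ℤ} {I : Finset ℤ} (hI : ∀ x ∈ I, 0 < x)
    {t : ℤ} (ht : t ∈ I) (horb : ∀ y, w.SameCycle t y ↔ y ∈ I ∪ I.image (fun a => -a))
    {c : ℤ} (hc : 0 < c) (hct : c ≤ t) :
    ∃ k ∈ I ∪ I.image (fun a => -a), k < c ∧ w k ∈ I ∧ c ≤ w k := by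
  have hnegt : -t ∉ (I ∪ I.image (fun a => -a)).filter (c ≤ ·) := fun h => by
    have := hI t ht
    have := (mem_filter.1 h).2
    omega
  obtain ⟨k, hk, hwk⟩ := ((horb (-t)).2 (mem_union_image_neg.2 (Or.inr (by simpa using ht))))
    |>.exists_notMem_apply_mem (mem_filter.2 ⟨mem_union_left _ ht, hct⟩) hnegt
  obtain ⟨hwkC, hcwk⟩ := mem_filter.1 hwk
  have hkC := (horb k).1 (Perm.sameCycle_apply_right.1 ((horb (w k)).2 hwkC))
  refine ⟨k, hkC, ?_, ?_, hcwk⟩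
  · by_contra hck
    exact hk (mem_filter.2 ⟨hkC, by omega⟩)
  · rcases mem_union_image_neg.1 hwkC with h | h
    · exact h
    · have := hI _ h
      omega

theorem card_le_sum_card_of_biUnion_eq {s : Finset ℕ} {I : ℕ → Finset ℤ} {n m : ℕ}
    (hcover : s.biUnion I = Icc 1 (n : ℤ)) (hm : m ≤ n) :
    m ≤ ∑ j ∈ s.filter (fun j => ∃ t ∈ I j, (n : ℤ) - m < t), #(I j) := by
  have hsub :
      Ioc ((n : ℤ) - m) n ⊆ (s.filter (fun j => ∃ t ∈ I j, (n : ℤ) - m < t)).biUnion I := by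
    intro t ht
    have htn : t ∈ s.biUnion I := hcover ▸ mem_Icc.2 ⟨by grind, (mem_Ioc.1 ht).2⟩
    obtain ⟨j, hj, htj⟩ := mem_biUnion.1 htn
    exact mem_biUnion.2 ⟨j, mem_filter.2 ⟨hj, t, htj, (mem_Ioc.1 ht).1⟩, htj⟩
  calc m = #(Ioc ((n : ℤ) - m) n) := by simp
    _ ≤ _ := card_le_card hsub
    _ ≤ _ := card_biUnion_le

theorem card_le_entryB {n ℓ : ℕ} {w : Perm ℤ} {I : ℕ → Finset ℤ}
    (hdisj : ∀ j j', 1 ≤ j → j < j' → j' ≤ ℓ → Disjoint (I j) (I j'))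
    (hcover : (Icc 1 ℓ).biUnion I = Icc 1 (n : ℤ))
    (horb : ∀ j, 1 ≤ j → j ≤ ℓ → ∀ x ∈ I j ∪ (I j).image (fun a => -a), ∀ y : ℤ,
      (w.SameCycle x y ↔ y ∈ I j ∪ (I j).image (fun a => -a)))
    {b : ℤ} (hb : 0 ≤ b) :
    #((Icc 1 ℓ).filter (fun j => ∃ t ∈ I j, b < t)) ≤ entryB n w b (b + 1) := by
  refine card_le_card_of_forall_subsingleton (fun j k => w k ∈ I j) ?_ ?_
  · intro j hj
    obtain ⟨hjℓ, t, ht, hbt⟩ := mem_filter.1 hj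
    have hIn : ∀ x ∈ I j, 1 ≤ x ∧ x ≤ n := fun x hx =>
      mem_Icc.1 (hcover ▸ mem_biUnion.2 ⟨j, hjℓ, hx⟩)
    obtain ⟨k, hkC, hkb, hwk, hbwk⟩ := exists_lt_le_apply_of_orbit
      (fun x hx => (hIn x hx).1) ht (horb j (mem_Icc.1 hjℓ).1 (mem_Icc.1 hjℓ).2 t
        (mem_union_left _ ht)) (c := b + 1) (by omega) (by omega)
    have hk : -(n : ℤ) ≤ k ∧ k ≠ 0 := by
      rcases mem_union_image_neg.1 hkC with h | h <;> have := hIn _ h <;> omega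
    exact ⟨k, mem_filter.2 ⟨mem_Icc.2 ⟨hk.1, by omega⟩, hk.2, hbwk⟩, hwk⟩
  · rintro k - j ⟨hj, hkj⟩ j' ⟨hj', hkj'⟩
    have hjℓ := mem_Icc.1 (mem_filter.1 hj).1
    have hj'ℓ := mem_Icc.1 (mem_filter.1 hj').1
    by_contra hne
    rcases lt_or_gt_of_ne hne with h | h
    · exact disjoint_left.1 (hdisj j j' hjℓ.1 h hj'ℓ.2) hkj hkj'
    · exact disjoint_left.1 (hdisj j' j hj'ℓ.1 h hjℓ.2) hkj' hkj

theorem stmt4_general (n : ℕ) (ℓ : ℕ) (α : ℕ → ℕ)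
    (hmono : ∀ i, 1 ≤ i → i < ℓ → α (i + 1) ≤ α i)
    (w : Equiv.Perm ℤ) (hw : MemCClass n ℓ α w)
    (m : ℕ) (hm : m ≤ n) :
    sInf {k : ℕ | m ≤ ∑ i ∈ Finset.Icc 1 k, α i} ≤
      entryB n w ((n : ℤ) - (m : ℤ)) ((n : ℤ) - (m : ℤ) + 1) := by
  obtain ⟨-, I, hcard, hdisj, hcover, horb⟩ := hw
  set J := (Icc 1 ℓ).filter (fun j => ∃ t ∈ I j, (n : ℤ) - m < t)
  have hanti : AntitoneOn α (Set.Icc 1 ℓ) :=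
    antitoneOn_of_succ_le Set.ordConnected_Icc fun i _ hi hi' => hmono i hi.1 (by
      simp only [Order.succ_eq_add_one, Set.mem_Icc] at hi'
      omega)
  have hmJ : m ≤ ∑ j ∈ J, α j := by
    calc m ≤ ∑ j ∈ J, #(I j) := card_le_sum_card_of_biUnion_eq hcover hm
      _ = ∑ j ∈ J, α j := sum_congr rfl fun j hj => by
        obtain ⟨h1, h2⟩ := mem_Icc.1 (mem_filter.1 hj).1
        exact hcard j h1 h2
  calc sInf {k : ℕ | m ≤ ∑ i ∈ Icc 1 k, α i} ≤ #J :=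
        Nat.sInf_le (hmJ.trans (sum_le_sum_Icc_card hanti (filter_subset _ _)))
    _ ≤ _ := card_le_entryB hdisj hcover horb (by omega)

/-- if `α = (α_1 ≥ ⋯ ≥ α_ℓ > 0)` is a partition of `n`, `w ∈ C_α`
and `0 ≤ m ≤ n`, then `w[n−m, n−m+1] ≥ min{k : α_1 + ⋯ + α_k ≥ m}`. -/
theorem stmt4 (n : ℕ) (hn : 1 ≤ n) (ℓ : ℕ) (α : ℕ → ℕ)
    (hmono : ∀ i, 1 ≤ i → i < ℓ → α (i + 1) ≤ α i)
    (hpos : ∀ i, 1 ≤ i → i ≤ ℓ → 0 < α i)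
    (hsupp : ∀ i, ℓ < i → α i = 0)
    (hsum : ∑ i ∈ Finset.Icc 1 ℓ, α i = n)
    (w : Equiv.Perm ℤ) (hw : MemCClass n ℓ α w)
    (m : ℕ) (hm : m ≤ n) :
    sInf {k : ℕ | m ≤ ∑ i ∈ Finset.Icc 1 k, α i} ≤
      entryB n w ((n : ℤ) - (m : ℤ)) ((n : ℤ) - (m : ℤ) + 1) :=
  stmt4_general n ℓ α hmono w hw m hm
end

section
/- Let u be a permutation of {1,...,n}, let 1 ≤ m ≤ n−1, and set I = {1 ≤ k ≤ ⌈m/2⌉ : u(k) ≥ n−⌊m/2⌋+1} and I' = {1 ≤ k ≤ n−⌊m/2⌋ : u(k) ≥ ⌈m/2⌉+1}. If O ⊆ {1,...,n} is an orbit of u of odd cardinality and |O ∩ I| + |O ∩ I'| = |O|, then O ⊆ {⌈m/2⌉+1, ⌈m/2⌉+2, ..., n−⌊m/2⌋}. -/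
/-!
Write `L` for the first `⌈m/2⌉` positions and `R` for the last `⌊m/2⌋`; they are disjoint since
`m < n`. On the `u`-stable set `O`, the conditions `x ∈ L` and `u x ∈ L` cut out sets of the same
size `|O ∩ L|`, and likewise for `R`. Inclusion–exclusion then turns `|O ∩ I| + |O ∩ I'| = |O|` into
`|O ∩ L ∩ u⁻¹R| + |O ∩ R ∩ u⁻¹L| = |O ∩ L| + |O ∩ R|`, which forces `u` to send `O ∩ L` into `R` and
`O ∩ R` into `L`, with `|O ∩ L| = |O ∩ R|`. Hence `O ∩ (L ∪ R)` is `u`-stable, so it is empty or all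
of the orbit `O`; in the latter case `|O| = 2 |O ∩ L|` would be even.
-/

open Finset

namespace Equiv.Perm

variable {α : Type*} {u : Perm α} {O : Finset α}

theorem map_finset_eq_self (hO : ∀ x ∈ O, u x ∈ O) : O.map u.toEmbedding = O :=
  map_eq_of_subset fun _ hy ↦ by
    obtain ⟨x, hx, rfl⟩ := mem_map.mp hy
    exact hO x hx

theorem card_filter_apply_eq (hO : ∀ x ∈ O, u x ∈ O) (p : α → Prop) [DecidablePred p] :
    #{x ∈ O | p (u x)} = #{x ∈ O | p x} := by
  conv_rhs => rw [← map_finset_eq_self hO, filter_map, card_map]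
  rfl

theorem forall_mem_apply_of_card_add_card_eq [DecidableEq α] (hO : ∀ x ∈ O, u x ∈ O)
    (p q : α → Prop) [DecidablePred p] [DecidablePred q]
    (hcard : #{x ∈ O | p x ∧ q (u x)} + #{x ∈ O | ¬ q x ∧ ¬ p (u x)} = #O) :
    (∀ x ∈ O, p x → q (u x)) ∧ (∀ x ∈ O, q x → p (u x)) ∧
      #{x ∈ O | p x} = #{x ∈ O | q x} := by
  have hP_le_p : #{x ∈ O | p x ∧ q (u x)} ≤ #{x ∈ O | p x} :=
    card_le_card (monotone_filter_right O fun _ _ h ↦ h.1)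
  have hP_le_q : #{x ∈ O | p x ∧ q (u x)} ≤ #{x ∈ O | q x} :=
    card_filter_apply_eq hO q ▸ card_le_card (monotone_filter_right O fun _ _ h ↦ h.2)
  have hQ_le_q : #{x ∈ O | q x ∧ p (u x)} ≤ #{x ∈ O | q x} :=
    card_le_card (monotone_filter_right O fun _ _ h ↦ h.1)
  have hQ_le_p : #{x ∈ O | q x ∧ p (u x)} ≤ #{x ∈ O | p x} :=
    card_filter_apply_eq hO p ▸ card_le_card (monotone_filter_right O fun _ _ h ↦ h.2)
  have hunion : #{x ∈ O | q x ∨ p (u x)} + #{x ∈ O | q x ∧ p (u x)}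
      = #{x ∈ O | q x} + #{x ∈ O | p x} := by
    rw [filter_or, filter_and, card_union_add_card_inter, card_filter_apply_eq hO p]
  have hcompl := card_filter_add_card_filter_not (s := O) fun x ↦ q x ∨ p (u x)
  simp only [not_or] at hcompl
  have hP : #{x ∈ {x ∈ O | p x} | q (u x)} = #{x ∈ O | p x} := by
    rw [filter_filter]; omega
  have hQ : #{x ∈ {x ∈ O | q x} | p (u x)} = #{x ∈ O | q x} := by
    rw [filter_filter]; omega
  refine ⟨fun x hx hpx ↦ ?_, fun x hx hqx ↦ ?_, by omega⟩
  · exact card_filter_eq_iff.mp hP x (mem_filter.mpr ⟨hx, hpx⟩)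
  · exact card_filter_eq_iff.mp hQ x (mem_filter.mpr ⟨hx, hqx⟩)

theorem apply_mem_of_sameCycle_iff_mem (hO : ∃ a ∈ O, ∀ y, u.SameCycle a y ↔ y ∈ O) {x : α}
    (hx : x ∈ O) : u x ∈ O := by
  obtain ⟨a, -, ha⟩ := hO
  exact (ha _).mp (sameCycle_apply_right.mpr ((ha x).mpr hx))

theorem subset_of_sameCycle_iff_mem [Finite α] (hO : ∃ a ∈ O, ∀ y, u.SameCycle a y ↔ y ∈ O)
    {s : Finset α} (hs : ∀ y ∈ s, u y ∈ s) {x : α} (hx : x ∈ O) (hxs : x ∈ s) : O ⊆ s := by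
  obtain ⟨a, -, ha⟩ := hO
  intro y hy
  obtain ⟨i, rfl⟩ := ((ha x).mpr hx).symm.trans ((ha y).mpr hy) |>.exists_nat_pow_eq
  clear hy
  induction i with
  | zero => exact hxs
  | succ i ih =>
    rw [pow_succ', mul_apply]
    exact hs _ ih

theorem forall_mem_not_of_odd_card [Finite α] [DecidableEq α]
    (hO : ∃ a ∈ O, ∀ y, u.SameCycle a y ↔ y ∈ O) (hodd : Odd #O)
    {p q : α → Prop} [DecidablePred p] [DecidablePred q] (hpq : ∀ x, p x → ¬ q x)
    (hcard : #{x ∈ O | p x ∧ q (u x)} + #{x ∈ O | ¬ q x ∧ ¬ p (u x)} = #O) :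
    ∀ x ∈ O, ¬ p x ∧ ¬ q x := by
  obtain ⟨hp_to_q, hq_to_p, hcard_pq⟩ :=
    forall_mem_apply_of_card_add_card_eq (fun _ ↦ apply_mem_of_sameCycle_iff_mem hO) p q hcard
  intro x hx
  rw [← not_or]
  intro hx_pq
  have hstable : ∀ y ∈ {y ∈ O | p y ∨ q y}, u y ∈ {y ∈ O | p y ∨ q y} := by
    simp only [mem_filter]
    rintro y ⟨hy, hpy | hqy⟩
    · exact ⟨apply_mem_of_sameCycle_iff_mem hO hy, .inr (hp_to_q y hy hpy)⟩
    · exact ⟨apply_mem_of_sameCycle_iff_mem hO hy, .inl (hq_to_p y hy hqy)⟩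
  have hO_eq : {y ∈ O | p y ∨ q y} = O :=
    (filter_subset _ O).antisymm
      (subset_of_sameCycle_iff_mem hO hstable hx (mem_filter.mpr ⟨hx, hx_pq⟩))
  have hO_card : #O = #{y ∈ O | p y} + #{y ∈ O | q y} := by
    rw [← card_union_of_disjoint (disjoint_filter.mpr fun x _ ↦ hpq x), ← filter_or, hO_eq]
  rw [hO_card, hcard_pq, ← two_mul] at hodd
  exact Nat.not_odd_iff_even.mpr (even_two_mul _) hodd

end Equiv.Perm

theorem stmt7_general (n : ℕ) (u : Equiv.Perm (Fin n)) (m : ℕ) (hm2 : m ≤ n - 1)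
    (I I' : Finset (Fin n))
    (hI : I = Finset.univ.filter
      (fun k : Fin n => (k : ℕ) + 1 ≤ (m + 1) / 2 ∧ n - m / 2 + 1 ≤ (u k : ℕ) + 1))
    (hI' : I' = Finset.univ.filter
      (fun k : Fin n => (k : ℕ) + 1 ≤ n - m / 2 ∧ (m + 1) / 2 + 1 ≤ (u k : ℕ) + 1))
    (O : Finset (Fin n))
    (hO : ∃ a ∈ O, ∀ y : Fin n, u.SameCycle a y ↔ y ∈ O)
    (hodd : Odd O.card)
    (hcard : (O ∩ I).card + (O ∩ I').card = O.card) :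
    ∀ x ∈ O, (m + 1) / 2 + 1 ≤ (x : ℕ) + 1 ∧ (x : ℕ) + 1 ≤ n - m / 2 := by
  intro x hx
  have hmn : m < n := by have := x.pos; omega
  have hOI : O ∩ I =
      {k ∈ O | k.val + 1 ≤ (m + 1) / 2 ∧ n - m / 2 + 1 ≤ (u k).val + 1} := by
    rw [hI, inter_filter, inter_univ]
  have hOI' : O ∩ I' =
      {k ∈ O | ¬ n - m / 2 + 1 ≤ k.val + 1 ∧ ¬ (u k).val + 1 ≤ (m + 1) / 2} := by
    rw [hI', inter_filter, inter_univ]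
    exact filter_congr fun k _ ↦ by omega
  rw [hOI, hOI'] at hcard
  have hx_mid := Equiv.Perm.forall_mem_not_of_odd_card hO hodd
    (p := fun k : Fin n ↦ k.val + 1 ≤ (m + 1) / 2) (q := fun k ↦ n - m / 2 + 1 ≤ k.val + 1)
    (fun _ _ _ ↦ by omega) hcard x hx
  omega

/-- let `u` be a permutation of `{1,...,n}` (encoded on `Fin n`, with
`k : Fin n` representing `k+1`), let `1 ≤ m ≤ n−1`, and set
`I = {1 ≤ k ≤ ⌈m/2⌉ : u(k) ≥ n−⌊m/2⌋+1}` and `I' = {1 ≤ k ≤ n−⌊m/2⌋ : u(k) ≥ ⌈m/2⌉+1}`.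
If `O ⊆ {1,...,n}` is an orbit of `u` of odd cardinality with `|O∩I| + |O∩I'| = |O|`,
then `O ⊆ {⌈m/2⌉+1, ..., n−⌊m/2⌋}`. -/
theorem stmt7 (n : ℕ) (u : Equiv.Perm (Fin n)) (m : ℕ) (hm1 : 1 ≤ m) (hm2 : m ≤ n - 1)
    (I I' : Finset (Fin n))
    (hI : I = Finset.univ.filter
      (fun k : Fin n => (k : ℕ) + 1 ≤ (m + 1) / 2 ∧ n - m / 2 + 1 ≤ (u k : ℕ) + 1))
    (hI' : I' = Finset.univ.filter
      (fun k : Fin n => (k : ℕ) + 1 ≤ n - m / 2 ∧ (m + 1) / 2 + 1 ≤ (u k : ℕ) + 1))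
    (O : Finset (Fin n))
    (hO : ∃ a ∈ O, ∀ y : Fin n, u.SameCycle a y ↔ y ∈ O)
    (hodd : Odd O.card)
    (hcard : (O ∩ I).card + (O ∩ I').card = O.card) :
    ∀ x ∈ O, (m + 1) / 2 + 1 ≤ (x : ℕ) + 1 ∧ (x : ℕ) + 1 ≤ n - m / 2 :=
  stmt7_general n u m hm2 I I' hI hI' O hO hodd hcard
end

section
/- Let u be a permutation of {1,...,n}, let 1 ≤ m ≤ n−1, and set I = {1 ≤ k ≤ ⌈m/2⌉ : u(k) ≥ n−⌊m/2⌋+1} and I' = {1 ≤ k ≤ n−⌊m/2⌋ : u(k) ≥ ⌈m/2⌉+1}. Then for every orbit O of u on {1,...,n}: |O ∩ I| + |O ∩ I'| ≤ |O|. -/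
/-! An element `k ∈ I` is sent by `u` to a position `u k ≥ n - ⌊m/2⌋ + 1`, which lies outside the
index range of `I'`. So `u` maps `O ∩ I` injectively into `O \ I'`, whence the bound. -/

open Finset

theorem Finset.card_inter_add_card_inter_le_of_mapsTo {α : Type*} [DecidableEq α] {f : α → α}
    {O A B : Finset α} (hinj : Set.InjOn f O) (hmaps : Set.MapsTo f O O)
    (hAB : ∀ a ∈ A, f a ∉ B) : #(O ∩ A) + #(O ∩ B) ≤ #O := by
  have hdisj : Disjoint ((O ∩ A).image f) (O ∩ B) :=
    disjoint_left.mpr fun _ hx hxB => by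
      obtain ⟨a, ha, rfl⟩ := mem_image.mp hx
      exact hAB a (mem_inter.mp ha).2 (mem_inter.mp hxB).2
  have hsub : (O ∩ A).image f ∪ (O ∩ B) ⊆ O :=
    union_subset (image_subset_iff.mpr fun a ha => hmaps (mem_inter.mp ha).1) inter_subset_left
  calc #(O ∩ A) + #(O ∩ B)
      = #((O ∩ A).image f) + #(O ∩ B) := by
        rw [card_image_of_injOn (hinj.mono (by simp))]
    _ = #((O ∩ A).image f ∪ (O ∩ B)) := (card_union_of_disjoint hdisj).symm
    _ ≤ #O := card_le_card hsub

theorem Equiv.Perm.mapsTo_of_forall_sameCycle_iff {α : Type*} {u : Equiv.Perm α} {a : α}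
    {O : Finset α} (hO : ∀ y, u.SameCycle a y ↔ y ∈ O) : Set.MapsTo u O O := fun k hk => by
  rw [Finset.mem_coe, ← hO] at hk ⊢
  exact sameCycle_apply_right.mpr hk

theorem stmt9_general (n : ℕ) (u : Equiv.Perm (Fin n)) (m : ℕ)
    (I I' : Finset (Fin n))
    (hI : I = Finset.univ.filter
      (fun k : Fin n => (k : ℕ) + 1 ≤ (m + 1) / 2 ∧ n - m / 2 + 1 ≤ (u k : ℕ) + 1))
    (hI' : I' = Finset.univ.filter
      (fun k : Fin n => (k : ℕ) + 1 ≤ n - m / 2 ∧ (m + 1) / 2 + 1 ≤ (u k : ℕ) + 1))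
    (O : Finset (Fin n))
    (hO : ∃ a ∈ O, ∀ y : Fin n, u.SameCycle a y ↔ y ∈ O) :
    (O ∩ I).card + (O ∩ I').card ≤ O.card := by
  obtain ⟨a, -, ha⟩ := hO
  refine card_inter_add_card_inter_le_of_mapsTo u.injective.injOn
    (Equiv.Perm.mapsTo_of_forall_sameCycle_iff ha) fun k hk hk' => ?_
  simp only [hI, hI', mem_filter, mem_univ, true_and] at hk hk'
  omega

/-- let `u` be a permutation of `{1,...,n}` (encoded on `Fin n`, with
`k : Fin n` representing `k+1`), let `1 ≤ m ≤ n−1`, and set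
`I = {1 ≤ k ≤ ⌈m/2⌉ : u(k) ≥ n−⌊m/2⌋+1}` and `I' = {1 ≤ k ≤ n−⌊m/2⌋ : u(k) ≥ ⌈m/2⌉+1}`.
Then for every orbit `O` of `u` on `{1,...,n}`: `|O∩I| + |O∩I'| ≤ |O|`. -/
theorem stmt9 (n : ℕ) (u : Equiv.Perm (Fin n)) (m : ℕ) (hm1 : 1 ≤ m) (hm2 : m ≤ n - 1)
    (I I' : Finset (Fin n))
    (hI : I = Finset.univ.filter
      (fun k : Fin n => (k : ℕ) + 1 ≤ (m + 1) / 2 ∧ n - m / 2 + 1 ≤ (u k : ℕ) + 1))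
    (hI' : I' = Finset.univ.filter
      (fun k : Fin n => (k : ℕ) + 1 ≤ n - m / 2 ∧ (m + 1) / 2 + 1 ≤ (u k : ℕ) + 1))
    (O : Finset (Fin n))
    (hO : ∃ a ∈ O, ∀ y : Fin n, u.SameCycle a y ↔ y ∈ O) :
    (O ∩ I).card + (O ∩ I').card ≤ O.card :=
  stmt9_general n u m I I' hI hI' O hO
end

section
/- Let α = (α_1 ≥ ⋯ ≥ α_ℓ > 0) be a partition. Then: (i) ψ_α(1) = 1, and if ℓ is even then ψ_α(ℓ) = −1; (ii) for every odd k with k ≤ ℓ, Σ_{i=1}^k ψ_α(i) = 1; (iii) for every even k with k ≤ ℓ, Σ_{i=1}^k ψ_α(i) = 1 + ψ_α(k); (iv) Σ_{i=1}^ℓ ψ_α(i) = κ_ℓ, where κ_ℓ = 0 if ℓ is even and κ_ℓ = 1 if ℓ is odd. -/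
/-!
For even `i ≥ 2`, `ψ_α(i)` and `ψ_α(i+1)` test the same descent `α_{i+1} < α_i` with opposite
signs, so they cancel. Hence the partial sums of `ψ_α` up to an odd index collapse to `ψ_α(1) = 1`,
and up to an even index `k` they equal `1 + ψ_α(k)`. For even `ℓ` the last part descends to
`α_{ℓ+1} = 0`, so `ψ_α(ℓ) = -1` and the total sum vanishes.
-/

/-- Lusztig's function `ψ_α` attached to a partition `α` (given as a function
`ℕ → ℕ`, with parts `α 1 ≥ α 2 ≥ ⋯ ≥ α ℓ > 0` and `α i = 0` for `i > ℓ`):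
`ψ_α(1) = 1`; for odd `i ≥ 3`, `ψ_α(i) = 1` if `α_{i−1} > α_i` and `0` otherwise;
for even `i`, `ψ_α(i) = −1` if `α_i > α_{i+1}` and `0` otherwise. -/
def psi (α : ℕ → ℕ) (i : ℕ) : ℤ :=
  if i = 1 then 1
  else if i % 2 = 1 then (if α i < α (i - 1) then 1 else 0)
  else (if α (i + 1) < α i then -1 else 0)

namespace psi

variable (α : ℕ → ℕ)

@[simp]
lemma one : psi α 1 = 1 := rfl

lemma of_even_of_lt {i : ℕ} (hi : Even i) (hlt : α (i + 1) < α i) : psi α i = -1 := by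
  have hi' : i % 2 = 0 := Nat.even_iff.mp hi
  simp only [psi, if_neg (show i ≠ 1 by omega), if_neg (show ¬ i % 2 = 1 by omega), if_pos hlt]

lemma add_succ_of_even {i : ℕ} (hi : Even i) (h2 : 2 ≤ i) : psi α i + psi α (i + 1) = 0 := by
  have hi' : i % 2 = 0 := Nat.even_iff.mp hi
  simp only [psi, if_neg (show i ≠ 1 by omega), if_neg (show i + 1 ≠ 1 by omega),
    if_pos (show (i + 1) % 2 = 1 by omega), if_neg (show ¬ i % 2 = 1 by omega),
    Nat.add_sub_cancel]
  split <;> ring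

lemma sum_Icc_two_mul_add_one (j : ℕ) : ∑ i ∈ Finset.Icc 1 (2 * j + 1), psi α i = 1 := by
  induction j with
  | zero => simp
  | succ j ih =>
    have hpair := add_succ_of_even α (i := 2 * j + 2) ⟨j + 1, by ring⟩ (by omega)
    rw [show 2 * (j + 1) + 1 = 2 * j + 2 + 1 by ring, Finset.sum_Icc_succ_top (by omega),
      Finset.sum_Icc_succ_top (by omega), ih]
    linarith

lemma sum_Icc_of_odd {k : ℕ} (hk : Odd k) : ∑ i ∈ Finset.Icc 1 k, psi α i = 1 := by
  obtain ⟨j, rfl⟩ := hk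
  exact sum_Icc_two_mul_add_one α j

lemma sum_Icc_of_even {k : ℕ} (hk : Even k) (h1 : 1 ≤ k) :
    ∑ i ∈ Finset.Icc 1 k, psi α i = 1 + psi α k := by
  obtain ⟨j, rfl⟩ := hk
  have hodd : Odd (j + j - 1) := ⟨j - 1, by omega⟩
  rw [show j + j = j + j - 1 + 1 by omega, Finset.sum_Icc_succ_top (by omega),
    sum_Icc_of_odd α hodd]

end psi

theorem stmt10_general (ℓ : ℕ) (hℓ : 1 ≤ ℓ) (α : ℕ → ℕ)
    (hpos : ∀ i, 1 ≤ i → i ≤ ℓ → 0 < α i)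
    (hsupp : ∀ i, ℓ < i → α i = 0) :
    psi α 1 = 1 ∧
    (Even ℓ → psi α ℓ = -1) ∧
    (∀ k, k ≤ ℓ → Odd k → ∑ i ∈ Finset.Icc 1 k, psi α i = 1) ∧
    (∀ k, 1 ≤ k → k ≤ ℓ → Even k → ∑ i ∈ Finset.Icc 1 k, psi α i = 1 + psi α k) ∧
    (∑ i ∈ Finset.Icc 1 ℓ, psi α i = if Even ℓ then 0 else 1) := by
  have hlast : Even ℓ → psi α ℓ = -1 := fun he =>
    psi.of_even_of_lt α he (by rw [hsupp (ℓ + 1) (by omega)]; exact hpos ℓ hℓ le_rfl)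
  refine ⟨psi.one α, hlast, fun k _ hk => psi.sum_Icc_of_odd α hk,
    fun k h1 _ hk => psi.sum_Icc_of_even α hk h1, ?_⟩
  rcases Nat.even_or_odd ℓ with he | ho
  · rw [if_pos he, psi.sum_Icc_of_even α he hℓ, hlast he]
    rfl
  · rw [if_neg (Nat.not_even_iff_odd.mpr ho), psi.sum_Icc_of_odd α ho]

/-- for a partition `α = (α_1 ≥ ⋯ ≥ α_ℓ > 0)`:
(i) `ψ_α(1) = 1`, and if `ℓ` is even then `ψ_α(ℓ) = −1`;
(ii) for every odd `k ≤ ℓ`, `Σ_{i=1}^k ψ_α(i) = 1`;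
(iii) for every even `k ≤ ℓ` (with `k ≥ 1`), `Σ_{i=1}^k ψ_α(i) = 1 + ψ_α(k)`;
(iv) `Σ_{i=1}^ℓ ψ_α(i) = κ_ℓ`, where `κ_ℓ = 0` if `ℓ` is even and `1` if `ℓ` is odd. -/
theorem stmt10 (ℓ : ℕ) (hℓ : 1 ≤ ℓ) (α : ℕ → ℕ)
    (hmono : ∀ i, 1 ≤ i → i < ℓ → α (i + 1) ≤ α i)
    (hpos : ∀ i, 1 ≤ i → i ≤ ℓ → 0 < α i)
    (hsupp : ∀ i, ℓ < i → α i = 0) :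
    psi α 1 = 1 ∧
    (Even ℓ → psi α ℓ = -1) ∧
    (∀ k, k ≤ ℓ → Odd k → ∑ i ∈ Finset.Icc 1 k, psi α i = 1) ∧
    (∀ k, 1 ≤ k → k ≤ ℓ → Even k → ∑ i ∈ Finset.Icc 1 k, psi α i = 1 + psi α k) ∧
    (∑ i ∈ Finset.Icc 1 ℓ, psi α i = if Even ℓ then 0 else 1) :=
  stmt10_general ℓ hℓ α hpos hsupp
end

section
/- Let α = (α_1 ≥ ⋯ ≥ α_ℓ > 0) be a partition of n in which every part α_i is even. Then the sequence α + ψ_α := (α_1 + ψ_α(1), ..., α_ℓ + ψ_α(ℓ)) is weakly decreasing with nonnegative entries summing to n + κ_ℓ, where κ_ℓ = 0 if ℓ is even and κ_ℓ = 1 if ℓ is odd; i.e., α + ψ_α is a partition of n + κ_ℓ. Moreover, writing α' = α + ψ_α: α'_1 = α_1 + 1; for each i with 2i+1 ≤ ℓ, (α'_{2i}, α'_{2i+1}) = (α_{2i}, α_{2i+1}) if α_{2i} = α_{2i+1} and (α'_{2i}, α'_{2i+1}) = (α_{2i}−1, α_{2i+1}+1) if α_{2i} > α_{2i+1}; and if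 ℓ is even, then α'_ℓ = α_ℓ − 1. -/
section

variable (α : ℕ → ℕ)

@[simp]
lemma psi_one : psi α 1 = 1 := rfl

lemma psi_two_mul (k : ℕ) :
    psi α (2 * k) = if α (2 * k + 1) < α (2 * k) then -1 else 0 := by
  simp only [psi, if_neg (by omega : 2 * k ≠ 1), if_neg (by omega : ¬ 2 * k % 2 = 1)]

lemma psi_two_mul_add_one {k : ℕ} (hk : k ≠ 0) :
    psi α (2 * k + 1) = if α (2 * k + 1) < α (2 * k) then 1 else 0 := by
  simp only [psi, if_neg (by omega : 2 * k + 1 ≠ 1), if_pos (by omega : (2 * k + 1) % 2 = 1),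
    Nat.add_sub_cancel]

lemma psi_two_mul_add_psi_two_mul_add_one {k : ℕ} (hk : k ≠ 0) :
    psi α (2 * k) + psi α (2 * k + 1) = 0 := by
  rw [psi_two_mul, psi_two_mul_add_one α hk]
  split_ifs <;> norm_num

lemma neg_one_le_psi (i : ℕ) : -1 ≤ psi α i := by
  unfold psi; split_ifs <;> norm_num

lemma psi_nonneg_of_odd {i : ℕ} (hi : Odd i) : 0 ≤ psi α i := by
  obtain ⟨k, rfl⟩ := hi
  rcases eq_or_ne k 0 with rfl | hk
  · simp
  · rw [psi_two_mul_add_one α hk]; split_ifs <;> norm_num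

lemma psi_nonpos_of_even {i : ℕ} (hi : Even i) : psi α i ≤ 0 := by
  obtain ⟨k, rfl⟩ := hi
  rw [← two_mul, psi_two_mul]; split_ifs <;> norm_num

lemma psi_eq_neg_one_of_even {i : ℕ} (hi : Even i) (hlt : α (i + 1) < α i) : psi α i = -1 := by
  obtain ⟨k, rfl⟩ := hi
  rw [← two_mul] at hlt ⊢
  rw [psi_two_mul, if_pos hlt]

lemma sum_Icc_one_two_mul_add_one_psi (k : ℕ) : ∑ i ∈ Finset.Icc 1 (2 * k + 1), psi α i = 1 := by
  induction k with
  | zero => simp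
  | succ k ih =>
    rw [show 2 * (k + 1) + 1 = 2 * k + 1 + 1 + 1 by ring,
      Finset.sum_Icc_succ_top (by omega), Finset.sum_Icc_succ_top (by omega), ih, add_assoc,
      show 2 * k + 1 + 1 = 2 * (k + 1) by ring, psi_two_mul_add_psi_two_mul_add_one α k.succ_ne_zero,
      add_zero]

lemma sum_Icc_one_psi {ℓ : ℕ} (hℓ : 1 ≤ ℓ) :
    ∑ i ∈ Finset.Icc 1 ℓ, psi α i = if Even ℓ then 1 + psi α ℓ else 1 := by
  obtain ⟨k, rfl | rfl⟩ := Nat.even_or_odd' ℓ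
  · obtain ⟨j, rfl⟩ : ∃ j, k = j + 1 := ⟨k - 1, by omega⟩
    rw [if_pos (even_two_mul _), show 2 * (j + 1) = 2 * j + 1 + 1 by ring,
      Finset.sum_Icc_succ_top (by omega), sum_Icc_one_two_mul_add_one_psi]
  · rw [if_neg (Nat.not_even_iff_odd.mpr (odd_two_mul_add_one k)),
      sum_Icc_one_two_mul_add_one_psi]

lemma add_psi_succ_le_add_psi {i : ℕ} (hi : 1 ≤ i) (hmono : α (i + 1) ≤ α i)
    (heven : Even (α i)) (heven_succ : Even (α (i + 1))) :
    (α (i + 1) : ℤ) + psi α (i + 1) ≤ α i + psi α i := by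
  rcases Nat.even_or_odd i with ⟨k, rfl⟩ | hodd
  · rw [← two_mul] at *
    rw [psi_two_mul, psi_two_mul_add_one α (by omega)]
    obtain ⟨a, ha⟩ := heven
    obtain ⟨b, hb⟩ := heven_succ
    split_ifs <;> omega
  · have := psi_nonneg_of_odd α hodd
    have := psi_nonpos_of_even α hodd.add_one
    omega

end

/-- let `α = (α_1 ≥ ⋯ ≥ α_ℓ > 0)` be a partition of `n` with all parts
even.  Then `α + ψ_α` is weakly decreasing with nonnegative entries summing to
`n + κ_ℓ` (`κ_ℓ = 0` if `ℓ` even, `1` if `ℓ` odd), i.e. it is a partition of `n + κ_ℓ`.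
Moreover, writing `α' = α + ψ_α`: `α'_1 = α_1 + 1`; for `1 ≤ i` with `2i+1 ≤ ℓ`,
`(α'_{2i}, α'_{2i+1}) = (α_{2i}, α_{2i+1})` if `α_{2i} = α_{2i+1}` and
`(α'_{2i}, α'_{2i+1}) = (α_{2i}−1, α_{2i+1}+1)` if `α_{2i} > α_{2i+1}`;
and if `ℓ` is even then `α'_ℓ = α_ℓ − 1`. -/
theorem stmt11 (n ℓ : ℕ) (hℓ : 1 ≤ ℓ) (α : ℕ → ℕ)
    (hmono : ∀ i, 1 ≤ i → i < ℓ → α (i + 1) ≤ α i)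
    (hpos : ∀ i, 1 ≤ i → i ≤ ℓ → 0 < α i)
    (hsupp : ∀ i, ℓ < i → α i = 0)
    (hsum : ∑ i ∈ Finset.Icc 1 ℓ, α i = n)
    (heven : ∀ i, 1 ≤ i → i ≤ ℓ → Even (α i)) :
    (∀ i, 1 ≤ i → i < ℓ →
      (α (i + 1) : ℤ) + psi α (i + 1) ≤ (α i : ℤ) + psi α i) ∧
    (∀ i, 1 ≤ i → i ≤ ℓ → 0 ≤ (α i : ℤ) + psi α i) ∧
    (∑ i ∈ Finset.Icc 1 ℓ, ((α i : ℤ) + psi α i) =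
      (n : ℤ) + (if Even ℓ then 0 else 1)) ∧
    ((α 1 : ℤ) + psi α 1 = (α 1 : ℤ) + 1) ∧
    (∀ i, 1 ≤ i → 2 * i + 1 ≤ ℓ →
      (α (2 * i) = α (2 * i + 1) →
        (α (2 * i) : ℤ) + psi α (2 * i) = (α (2 * i) : ℤ) ∧
        (α (2 * i + 1) : ℤ) + psi α (2 * i + 1) = (α (2 * i + 1) : ℤ)) ∧
      (α (2 * i + 1) < α (2 * i) →
        (α (2 * i) : ℤ) + psi α (2 * i) = (α (2 * i) : ℤ) - 1 ∧
        (α (2 * i + 1) : ℤ) + psi α (2 * i + 1) = (α (2 * i + 1) : ℤ) + 1)) ∧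
    (Even ℓ → (α ℓ : ℤ) + psi α ℓ = (α ℓ : ℤ) - 1) := by
  have hpsi_last (h : Even ℓ) : psi α ℓ = -1 :=
    psi_eq_neg_one_of_even α h (by rw [hsupp (ℓ + 1) (by omega)]; exact hpos ℓ hℓ le_rfl)
  refine ⟨fun i hi hiℓ => add_psi_succ_le_add_psi α hi (hmono i hi hiℓ) (heven i hi hiℓ.le)
      (heven (i + 1) (by omega) hiℓ),
    fun i hi hiℓ => by have := hpos i hi hiℓ; have := neg_one_le_psi α i; omega, ?_,
    by rw [psi_one], fun i hi _ => ?_, fun h => by rw [hpsi_last h]; ring⟩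
  · rw [Finset.sum_add_distrib, ← Nat.cast_sum, hsum, sum_Icc_one_psi α hℓ]
    split_ifs with h
    · rw [hpsi_last h]; ring
    · rfl
  · rw [psi_two_mul, psi_two_mul_add_one α (by omega)]
    exact ⟨fun heq => by simp [heq], fun hlt => by simp [hlt, sub_eq_add_neg]⟩
end

section
/- Let α = (α_1 ≥ ⋯ ≥ α_ℓ > 0) be a partition in which every part is even. Define a sequence (δ_i*)_{i ≥ 1} by: δ_i* = α_i* + 1 if i is odd, α_i* is even, and m_α(i−1) > 0; δ_i* = α_i* − 1 if i is even, α_i* is even, and m_α(i) > 0; and δ_i* = α_i* otherwise. Then (δ_i*)_{i ≥ 1} is weakly decreasing, and the partition whose conjugate is (δ_i*)_{i ≥ 1} equals α + ψ_α := (α_1 + ψ_α(1), ..., α_ℓ + ψ_α(ℓ)). -/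
/-- The conjugate partition: `α_i* = #{j : α_j ≥ i}` (parts indexed by `1,...,ℓ`). -/
def conjPart (ℓ : ℕ) (α : ℕ → ℕ) (i : ℕ) : ℕ :=
  ((Finset.Icc 1 ℓ).filter (fun j => i ≤ α j)).card

/-- The multiplicity `m_α(k) = #{j : α_j = k}` of `k` as a part of `α`
(so `m_α(0) = 0` since all parts are positive). -/
def multPart (ℓ : ℕ) (α : ℕ → ℕ) (k : ℕ) : ℕ :=
  ((Finset.Icc 1 ℓ).filter (fun j => α j = k)).card

/-- The sequence `δ*` of Spaltenstein: `δ_i* = α_i* + 1` if `i` odd, `α_i*` even and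
`m_α(i−1) > 0`; `δ_i* = α_i* − 1` if `i` even, `α_i*` even and `m_α(i) > 0`;
`δ_i* = α_i*` otherwise. -/
def dstar (ℓ : ℕ) (α : ℕ → ℕ) (i : ℕ) : ℕ :=
  if Odd i ∧ Even (conjPart ℓ α i) ∧ 0 < multPart ℓ α (i - 1) then conjPart ℓ α i + 1
  else if Even i ∧ Even (conjPart ℓ α i) ∧ 0 < multPart ℓ α i then conjPart ℓ α i - 1
  else conjPart ℓ α i

section Partition

open Finset

variable {ℓ : ℕ} {α : ℕ → ℕ} {i j : ℕ}

theorem conjPart_le_length (i : ℕ) : conjPart ℓ α i ≤ ℓ :=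
  (card_filter_le _ _).trans (by simp)

theorem multPart_pos_iff (k : ℕ) :
    0 < multPart ℓ α k ↔ conjPart ℓ α (k + 1) < conjPart ℓ α k := by
  have hsplit : conjPart ℓ α k = conjPart ℓ α (k + 1) + multPart ℓ α k := by
    rw [conjPart, conjPart, multPart, ← card_union_of_disjoint]
    · congr 1
      ext x
      simp only [mem_filter, mem_union, mem_Icc]
      omega
    · exact disjoint_filter.2 fun _ _ h => by omega
  omega

section Antitone

variable (hmono : ∀ i, 1 ≤ i → i < ℓ → α (i + 1) ≤ α i)
include hmono

theorem antitoneOn_parts : AntitoneOn α (Set.Icc 1 ℓ) :=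
  antitoneOn_of_succ_le Set.ordConnected_Icc fun a _ ha hsa => by
    simp only [Set.mem_Icc, Order.succ_eq_add_one] at ha hsa ⊢
    exact hmono a ha.1 (by omega)

theorem le_conjPart_iff (hj : 1 ≤ j) (hjℓ : j ≤ ℓ) : j ≤ conjPart ℓ α i ↔ i ≤ α j := by
  have hanti := antitoneOn_parts hmono
  constructor
  · intro h
    by_contra! hlt
    have hsub : (Icc 1 ℓ).filter (fun x => i ≤ α x) ⊆ Icc 1 (j - 1) := fun x hx => by
      simp only [mem_filter, mem_Icc] at hx ⊢
      refine ⟨hx.1.1, not_lt.1 fun hjx => ?_⟩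
      have := hanti ⟨hj, hjℓ⟩ ⟨hx.1.1, hx.1.2⟩ (by omega : j ≤ x)
      omega
    have := card_le_card hsub
    rw [Nat.card_Icc] at this
    exact absurd h (by unfold conjPart; omega)
  · intro h
    have hsub : Icc 1 j ⊆ (Icc 1 ℓ).filter (fun x => i ≤ α x) := fun x hx => by
      simp only [mem_filter, mem_Icc] at hx ⊢
      exact ⟨⟨hx.1, hx.2.trans hjℓ⟩, h.trans (hanti ⟨hx.1, hx.2.trans hjℓ⟩ ⟨hj, hjℓ⟩ hx.2)⟩
    simpa [conjPart] using card_le_card hsub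

theorem le_conjPart_iff_of_one_le (hsupp : ∀ i, ℓ < i → α i = 0) (hi : 1 ≤ i) (hj : 1 ≤ j) :
    j ≤ conjPart ℓ α i ↔ i ≤ α j := by
  rcases le_or_gt j ℓ with hjℓ | hℓj
  · exact le_conjPart_iff hmono hj hjℓ
  · have := conjPart_le_length (ℓ := ℓ) (α := α) i
    rw [hsupp j hℓj]
    omega

end Antitone

theorem le_dstar_iff_of_even (hi : Even i) :
    j ≤ dstar ℓ α i ↔
      j ≤ conjPart ℓ α i ∧
        ¬ (j = conjPart ℓ α i ∧ Even j ∧ conjPart ℓ α (i + 1) < conjPart ℓ α i) := by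
  simp only [dstar, multPart_pos_iff]
  split_ifs with h₁ h₂
  · exact absurd h₁.1 (Nat.not_odd_iff_even.2 hi)
  · obtain ⟨-, hc, hlt⟩ := h₂
    constructor
    · intro h
      exact ⟨by omega, by rintro ⟨hjc, -, -⟩; omega⟩
    · rintro ⟨h, hne⟩
      have : j ≠ conjPart ℓ α i := fun hjc => hne ⟨hjc, hjc ▸ hc, hlt⟩
      omega
  · exact ⟨fun h => ⟨h, fun ⟨hjc, hj, hlt⟩ => h₂ ⟨hi, hjc ▸ hj, hlt⟩⟩, And.left⟩

theorem le_dstar_iff_of_odd (hi : Odd i) :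
    j ≤ dstar ℓ α i ↔
      j ≤ conjPart ℓ α i ∨
        (j = conjPart ℓ α i + 1 ∧ Even (conjPart ℓ α i) ∧
          conjPart ℓ α i < conjPart ℓ α (i - 1)) := by
  have hi1 : i - 1 + 1 = i := Nat.sub_add_cancel hi.pos
  simp only [dstar, multPart_pos_iff, hi1]
  split_ifs with h₁ h₂
  · obtain ⟨-, hc, hlt⟩ := h₁
    constructor
    · intro h
      exact (Nat.lt_or_eq_of_le h).imp Nat.le_of_lt_succ fun hj => ⟨hj, hc, hlt⟩
    · rintro (h | ⟨h, -⟩) <;> omega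
  · exact absurd hi (Nat.not_odd_iff_even.2 h₂.1)
  · exact ⟨Or.inl, fun h => h.resolve_right fun ⟨_, hc, hlt⟩ => h₁ ⟨hi, hc, hlt⟩⟩

theorem dstar_le_length (i : ℕ) : dstar ℓ α i ≤ ℓ := by
  have hc := conjPart_le_length (ℓ := ℓ) (α := α)
  rcases Nat.even_or_odd i with hi | hi
  · exact le_of_forall_le fun j hj => ((le_dstar_iff_of_even hi).1 hj).1.trans (hc i)
  · refine le_of_forall_le fun j hj => ?_
    rcases (le_dstar_iff_of_odd hi).1 hj with h | ⟨h, -, hlt⟩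
    · exact h.trans (hc i)
    · have := hc (i - 1)
      omega


theorem psi_le_one (j : ℕ) : psi α j ≤ 1 := by
  unfold psi
  split_ifs <;> omega

theorem add_psi_nonneg (j : ℕ) : 0 ≤ (α j : ℤ) + psi α j := by
  unfold psi
  split_ifs <;> omega

section Even

variable (hmono : ∀ i, 1 ≤ i → i < ℓ → α (i + 1) ≤ α i) (hsupp : ∀ i, ℓ < i → α i = 0)
  (heven : ∀ i, 1 ≤ i → i ≤ ℓ → Even (α i))
include hmono hsupp heven

theorem le_dstar_iff (hi : 1 ≤ i) (hj : 1 ≤ j) (hjℓ : j ≤ ℓ) :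
    j ≤ dstar ℓ α i ↔ (i : ℤ) ≤ α j + psi α j := by
  have hαj := Nat.even_iff.1 (heven j hj hjℓ)
  have hj_i := le_conjPart_iff (i := i) hmono hj hjℓ
  rcases Nat.even_or_odd i with hie | hio
  · have hj_succ_i := le_conjPart_iff_of_one_le (i := i) (j := j + 1) hmono hsupp hi (by omega)
    have hj_i_succ := le_conjPart_iff (i := i + 1) hmono hj hjℓ
    have := Nat.even_iff.1 hie
    rw [le_dstar_iff_of_even hie, Nat.even_iff, psi]
    split_ifs <;> omega
  · have hαj_pred : 2 ≤ j → α (j - 1) % 2 = 0 := fun _ =>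
      Nat.even_iff.1 (heven _ (by omega) (by omega))
    have hj_i_pred := le_conjPart_iff (i := i - 1) hmono hj hjℓ
    have hj_pred_i : 2 ≤ j → (j - 1 ≤ conjPart ℓ α i ↔ i ≤ α (j - 1)) := fun _ =>
      le_conjPart_iff hmono (by omega) (by omega)
    have := Nat.odd_iff.1 hio
    rw [le_dstar_iff_of_odd hio, Nat.even_iff, psi]
    split_ifs <;> omega

theorem dstar_succ_le (hi : 1 ≤ i) : dstar ℓ α (i + 1) ≤ dstar ℓ α i := by
  refine le_of_forall_le fun j hj => ?_
  rcases Nat.eq_zero_or_pos j with rfl | hj1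
  · exact Nat.zero_le _
  have hjℓ := hj.trans (dstar_le_length (i + 1))
  have := (le_dstar_iff hmono hsupp heven (by omega) hj1 hjℓ).1 hj
  exact (le_dstar_iff hmono hsupp heven hi hj1 hjℓ).2 (by push_cast at this; omega)

end Even

theorem card_filter_Icc_le_intCast {n : ℕ} {b : ℤ} (h0 : 0 ≤ b) (hb : b ≤ n) :
    (((Icc 1 n).filter (fun i : ℕ => (i : ℤ) ≤ b)).card : ℤ) = b := by
  have : (Icc 1 n).filter (fun i : ℕ => (i : ℤ) ≤ b) = Icc 1 b.toNat := by
    ext i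
    simp only [mem_filter, mem_Icc]
    omega
  rw [this, Nat.card_Icc]
  omega

end Partition

theorem stmt12_general (ℓ : ℕ) (α : ℕ → ℕ)
    (hmono : ∀ i, 1 ≤ i → i < ℓ → α (i + 1) ≤ α i)
    (hsupp : ∀ i, ℓ < i → α i = 0)
    (heven : ∀ i, 1 ≤ i → i ≤ ℓ → Even (α i)) :
    (∀ i, 1 ≤ i → dstar ℓ α (i + 1) ≤ dstar ℓ α i) ∧
    (∀ j, 1 ≤ j → j ≤ ℓ →
      ((((Finset.Icc 1 (α 1 + 1)).filter (fun i => j ≤ dstar ℓ α i)).card : ℤ) =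
        (α j : ℤ) + psi α j)) ∧
    (∀ j, ℓ < j →
      ((Finset.Icc 1 (α 1 + 1)).filter (fun i => j ≤ dstar ℓ α i)).card = 0) := by
  refine ⟨fun i hi => dstar_succ_le hmono hsupp heven hi, fun j hj hjℓ => ?_, fun j hj => ?_⟩
  · have hfilter : (Finset.Icc 1 (α 1 + 1)).filter (fun i => j ≤ dstar ℓ α i) =
        (Finset.Icc 1 (α 1 + 1)).filter (fun i : ℕ => (i : ℤ) ≤ α j + psi α j) :=
      Finset.filter_congr fun i hi =>
        le_dstar_iff hmono hsupp heven (Finset.mem_Icc.1 hi).1 hj hjℓ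
    have hαj : α j ≤ α 1 := antitoneOn_parts hmono ⟨le_rfl, hj.trans hjℓ⟩ ⟨hj, hjℓ⟩ hj
    rw [hfilter, card_filter_Icc_le_intCast (add_psi_nonneg j)]
    have := psi_le_one (α := α) j
    push_cast
    omega
  · refine Finset.card_eq_zero.2 (Finset.filter_eq_empty_iff.2 fun i _ => ?_)
    have := dstar_le_length (ℓ := ℓ) (α := α) i
    omega

/-- let `α = (α_1 ≥ ⋯ ≥ α_ℓ > 0)` be a partition with all parts even.
Then `(δ_i*)_{i ≥ 1}` is weakly decreasing, and the partition whose conjugate is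
`(δ_i*)_{i ≥ 1}` is `α + ψ_α`: its `j`-th part `#{i ≥ 1 : δ_i* ≥ j}` equals
`α_j + ψ_α(j)` for `1 ≤ j ≤ ℓ` and `0` for `j > ℓ`.  (Since `δ_i* = 0` for
`i > α_1 + 1`, the counts are taken over `1 ≤ i ≤ α_1 + 1`.) -/
theorem stmt12 (ℓ : ℕ) (α : ℕ → ℕ)
    (hmono : ∀ i, 1 ≤ i → i < ℓ → α (i + 1) ≤ α i)
    (hpos : ∀ i, 1 ≤ i → i ≤ ℓ → 0 < α i)
    (hsupp : ∀ i, ℓ < i → α i = 0)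
    (heven : ∀ i, 1 ≤ i → i ≤ ℓ → Even (α i)) :
    (∀ i, 1 ≤ i → dstar ℓ α (i + 1) ≤ dstar ℓ α i) ∧
    (∀ j, 1 ≤ j → j ≤ ℓ →
      ((((Finset.Icc 1 (α 1 + 1)).filter (fun i => j ≤ dstar ℓ α i)).card : ℤ) =
        (α j : ℤ) + psi α j)) ∧
    (∀ j, ℓ < j →
      ((Finset.Icc 1 (α 1 + 1)).filter (fun i => j ≤ dstar ℓ α i)).card = 0) :=
  stmt12_general ℓ α hmono hsupp heven
end

section
/- Let α = (α_1 ≥ ⋯ ≥ α_ℓ > 0) be a partition in which every part is even. Then the map i ↦ α_i* + 1 is a bijection from the set {i ≥ 1 : i odd, α_i* even, m_α(i−1) > 0} onto the set {j : 1 ≤ j ≤ ℓ, j odd, and (j = 1 or α_{j−1} > α_j)}, with inverse given by j ↦ α_j + 1. -/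
open Finset

theorem Finset.filter_Icc_one_eq_Icc_card {ℓ : ℕ} {p : ℕ → Prop} [DecidablePred p]
    (hp : ∀ a b, 1 ≤ a → a ≤ b → b ≤ ℓ → p b → p a) :
    (Icc 1 ℓ).filter p = Icc 1 #((Icc 1 ℓ).filter p) := by
  induction ℓ with
  | zero => simp
  | succ n ih =>
    rw [← insert_Icc_right_eq_Icc_add_one (by omega), filter_insert]
    by_cases h : p (n + 1)
    · have hall : (Icc 1 n).filter p = Icc 1 n :=
        filter_true_of_mem fun a ha =>
        hp a (n + 1) (mem_Icc.1 ha).1 ((mem_Icc.1 ha).2.trans n.le_succ) le_rfl h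
      simp [h, hall, insert_Icc_right_eq_Icc_add_one]
    · simpa [h] using ih fun a b ha hab hb => hp a b ha hab (by omega)

section Conjugate

variable {ℓ : ℕ} {α : ℕ → ℕ} {i j : ℕ}

theorem mem_Icc_conjPart_iff (hα : AntitoneOn α (Set.Icc 1 ℓ)) :
    j ∈ Icc 1 (conjPart ℓ α i) ↔ j ∈ Icc 1 ℓ ∧ i ≤ α j := by
  rw [conjPart, ← filter_Icc_one_eq_Icc_card, mem_filter]
  intro a b ha hab hb hib
  exact hib.trans (hα ⟨ha, hab.trans hb⟩ ⟨ha.trans hab, hb⟩ hab)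

theorem le_apply_conjPart (hα : AntitoneOn α (Set.Icc 1 ℓ)) (h : 1 ≤ conjPart ℓ α i) :
    i ≤ α (conjPart ℓ α i) :=
  ((mem_Icc_conjPart_iff hα).1 (mem_Icc.2 ⟨h, le_rfl⟩)).2

theorem apply_conjPart_add_one_lt (hα : AntitoneOn α (Set.Icc 1 ℓ))
    (h : conjPart ℓ α i + 1 ≤ ℓ) : α (conjPart ℓ α i + 1) < i := by
  by_contra! hle
  have := (mem_Icc_conjPart_iff hα).2 ⟨mem_Icc.2 ⟨by omega, h⟩, hle⟩
  simp at this

theorem apply_conjPart_add_one_eq (hα : AntitoneOn α (Set.Icc 1 ℓ)) (hi : 1 ≤ i)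
    (hm : 0 < multPart ℓ α (i - 1)) :
    conjPart ℓ α i + 1 ≤ ℓ ∧ α (conjPart ℓ α i + 1) = i - 1 := by
  obtain ⟨t, ht⟩ := card_pos.1 hm
  obtain ⟨ht, hαt⟩ := mem_filter.1 ht
  rw [mem_Icc] at ht
  have htc : t ∉ Icc 1 (conjPart ℓ α i) := by
    rw [mem_Icc_conjPart_iff hα]
    omega
  have hct : conjPart ℓ α i < t := by
    simp only [mem_Icc, not_and, not_le] at htc
    omega
  have hcl : conjPart ℓ α i + 1 ≤ ℓ := by omega
  have hlt := apply_conjPart_add_one_lt hα hcl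
  have hge : α t ≤ α (conjPart ℓ α i + 1) := hα ⟨by omega, hcl⟩ ⟨by omega, ht.2⟩ hct
  exact ⟨hcl, by omega⟩

theorem conjPart_apply_add_one_add_one (hα : AntitoneOn α (Set.Icc 1 ℓ)) (hj : j ∈ Icc 1 ℓ)
    (hjump : j = 1 ∨ α j < α (j - 1)) : conjPart ℓ α (α j + 1) + 1 = j := by
  have hupper : j ∉ Icc 1 (conjPart ℓ α (α j + 1)) := by
    rw [mem_Icc_conjPart_iff hα]
    omega
  have hlower : j = 1 ∨ j - 1 ∈ Icc 1 (conjPart ℓ α (α j + 1)) := by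
    rw [mem_Icc_conjPart_iff hα]
    simp only [mem_Icc] at hj ⊢
    omega
  simp only [mem_Icc] at hj hupper hlower
  omega

end Conjugate

theorem stmt13_general (ℓ : ℕ) (α : ℕ → ℕ)
    (hmono : ∀ i, 1 ≤ i → i < ℓ → α (i + 1) ≤ α i)
    (heven : ∀ i, 1 ≤ i → i ≤ ℓ → Even (α i)) :
    Set.BijOn (fun i => conjPart ℓ α i + 1)
      {i : ℕ | 1 ≤ i ∧ Odd i ∧ Even (conjPart ℓ α i) ∧ 0 < multPart ℓ α (i - 1)}
      {j : ℕ | 1 ≤ j ∧ j ≤ ℓ ∧ Odd j ∧ (j = 1 ∨ α j < α (j - 1))} ∧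
    Set.InvOn (fun j => α j + 1) (fun i => conjPart ℓ α i + 1)
      {i : ℕ | 1 ≤ i ∧ Odd i ∧ Even (conjPart ℓ α i) ∧ 0 < multPart ℓ α (i - 1)}
      {j : ℕ | 1 ≤ j ∧ j ≤ ℓ ∧ Odd j ∧ (j = 1 ∨ α j < α (j - 1))} := by
  have hα : AntitoneOn α (Set.Icc 1 ℓ) :=
    antitoneOn_of_succ_le Set.ordConnected_Icc fun a _ ha hsa => hmono a ha.1 (by
      simp only [Order.succ_eq_add_one, Set.mem_Icc] at hsa; omega)
  have hleft : Set.LeftInvOn (fun j => α j + 1) (fun i => conjPart ℓ α i + 1)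
      {i | 1 ≤ i ∧ Odd i ∧ Even (conjPart ℓ α i) ∧ 0 < multPart ℓ α (i - 1)} := by
    rintro i ⟨hi, -, -, hm⟩
    have := (apply_conjPart_add_one_eq hα hi hm).2
    simp only [this]
    omega
  have hright : Set.RightInvOn (fun j => α j + 1) (fun i => conjPart ℓ α i + 1)
      {j | 1 ≤ j ∧ j ≤ ℓ ∧ Odd j ∧ (j = 1 ∨ α j < α (j - 1))} :=
    fun j ⟨h1, hl, _, hjump⟩ =>
      conjPart_apply_add_one_add_one hα (mem_Icc.2 ⟨h1, hl⟩) hjump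
  refine ⟨Set.InvOn.bijOn ⟨hleft, hright⟩ ?_ ?_, hleft, hright⟩
  · rintro i ⟨hi, -, hev, hm⟩
    obtain ⟨hcl, heq⟩ := apply_conjPart_add_one_eq hα hi hm
    refine ⟨Nat.le_add_left 1 _, hcl, hev.add_one, ?_⟩
    rcases Nat.eq_zero_or_pos (conjPart ℓ α i) with h0 | h0
    · exact Or.inl (by simp [h0])
    · have := le_apply_conjPart hα h0
      exact Or.inr (by simp only [add_tsub_cancel_right]; omega)
  · rintro j ⟨h1, hl, hodd, hjump⟩
    have hconj := conjPart_apply_add_one_add_one hα (mem_Icc.2 ⟨h1, hl⟩) hjump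
    refine ⟨Nat.le_add_left 1 _, (heven j h1 hl).add_one, ?_, ?_⟩
    · rw [show conjPart ℓ α (α j + 1) = j - 1 by omega]
      exact Nat.Odd.sub_odd hodd odd_one
    · exact card_pos.2 ⟨j, by simp [h1, hl]⟩

/-- let `α = (α_1 ≥ ⋯ ≥ α_ℓ > 0)` be a partition with all parts even.
Then `i ↦ α_i* + 1` is a bijection from
`{i ≥ 1 : i odd, α_i* even, m_α(i−1) > 0}` onto
`{j : 1 ≤ j ≤ ℓ, j odd, (j = 1 or α_{j−1} > α_j)}`, with inverse `j ↦ α_j + 1`. -/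
theorem stmt13 (ℓ : ℕ) (α : ℕ → ℕ)
    (hmono : ∀ i, 1 ≤ i → i < ℓ → α (i + 1) ≤ α i)
    (hpos : ∀ i, 1 ≤ i → i ≤ ℓ → 0 < α i)
    (hsupp : ∀ i, ℓ < i → α i = 0)
    (heven : ∀ i, 1 ≤ i → i ≤ ℓ → Even (α i)) :
    Set.BijOn (fun i => conjPart ℓ α i + 1)
      {i : ℕ | 1 ≤ i ∧ Odd i ∧ Even (conjPart ℓ α i) ∧ 0 < multPart ℓ α (i - 1)}
      {j : ℕ | 1 ≤ j ∧ j ≤ ℓ ∧ Odd j ∧ (j = 1 ∨ α j < α (j - 1))} ∧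
    Set.InvOn (fun j => α j + 1) (fun i => conjPart ℓ α i + 1)
      {i : ℕ | 1 ≤ i ∧ Odd i ∧ Even (conjPart ℓ α i) ∧ 0 < multPart ℓ α (i - 1)}
      {j : ℕ | 1 ≤ j ∧ j ≤ ℓ ∧ Odd j ∧ (j = 1 ∨ α j < α (j - 1))} :=
  stmt13_general ℓ α hmono heven
end

section
/- Let α = (α_1 ≥ ⋯ ≥ α_ℓ > 0) be a partition in which every part is even. Then the map i ↦ α_i* is a bijection from the set {i ≥ 1 : i even, α_i* even, m_α(i) > 0} onto the set {j : 1 ≤ j ≤ ℓ, j even, α_j > α_{j+1}} (with the convention α_{ℓ+1} = 0), with inverse given by j ↦ α_j. -/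
namespace PartitionConj

variable {ℓ : ℕ} {α : ℕ → ℕ}

theorem antitoneOn_Ici_one (hmono : ∀ i, 1 ≤ i → i < ℓ → α (i + 1) ≤ α i)
    (hsupp : ∀ i, ℓ < i → α i = 0) : AntitoneOn α (Set.Ici 1) :=
  antitoneOn_nat_Ici_of_succ_le fun n hn => by
    rcases lt_or_ge n ℓ with h | h
    · exact hmono n hn h
    · simp [hsupp (n + 1) (by omega)]

theorem conjPart_eq_of_descent (hα : AntitoneOn α (Set.Ici 1)) {i j : ℕ} (hjℓ : j ≤ ℓ)
    (hlt : α (j + 1) < i) (hle : i ≤ α j) : conjPart ℓ α i = j := by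
  have hset : (Finset.Icc 1 ℓ).filter (fun k => i ≤ α k) = Finset.Icc 1 j := by
    ext k
    simp only [Finset.mem_filter, Finset.mem_Icc]
    constructor
    · rintro ⟨⟨hk, -⟩, hik⟩
      refine ⟨hk, not_lt.mp fun hjk => ?_⟩
      have : α k ≤ α (j + 1) := hα (by simp) (by simp [hk]) hjk
      omega
    · rintro ⟨hk, hkj⟩
      have : α j ≤ α k := hα (Set.mem_Ici.mpr hk) (Set.mem_Ici.mpr (hk.trans hkj)) hkj
      exact ⟨⟨hk, hkj.trans hjℓ⟩, hle.trans this⟩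
  rw [conjPart, hset, Nat.card_Icc, Nat.add_sub_cancel]

theorem conjPart_apply_of_descent (hα : AntitoneOn α (Set.Ici 1)) {j : ℕ} (hjℓ : j ≤ ℓ)
    (hlt : α (j + 1) < α j) : conjPart ℓ α (α j) = j :=
  conjPart_eq_of_descent hα hjℓ hlt le_rfl

theorem exists_descent_of_multPart_pos (hα : AntitoneOn α (Set.Ici 1))
    (hsupp : ∀ i, ℓ < i → α i = 0) {i : ℕ} (hi : 0 < i) (hm : 0 < multPart ℓ α i) :
    ∃ j, 1 ≤ j ∧ j ≤ ℓ ∧ α (j + 1) < α j ∧ α j = i := by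
  set S := (Finset.Icc 1 ℓ).filter (fun k => α k = i)
  have hS : S.Nonempty := Finset.card_pos.mp hm
  obtain ⟨⟨hj, hjℓ⟩, hαj⟩ :
      (1 ≤ S.max' hS ∧ S.max' hS ≤ ℓ) ∧ α (S.max' hS) = i := by
    simpa [S] using S.max'_mem hS
  refine ⟨S.max' hS, hj, hjℓ, ?_, hαj⟩
  have hle : α (S.max' hS + 1) ≤ α (S.max' hS) := hα (by simp [hj]) (by simp) (by omega)
  refine lt_of_le_of_ne hle fun heq => ?_
  rcases le_or_gt (S.max' hS + 1) ℓ with h | h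
  · have hmem : S.max' hS + 1 ∈ S := by simp [S, h, heq, hαj]
    have := S.le_max' _ hmem
    omega
  · have := hsupp _ h
    omega

theorem descent_conjPart_of_multPart_pos (hα : AntitoneOn α (Set.Ici 1))
    (hsupp : ∀ i, ℓ < i → α i = 0) {i : ℕ} (hi : 0 < i) (hm : 0 < multPart ℓ α i) :
    1 ≤ conjPart ℓ α i ∧ conjPart ℓ α i ≤ ℓ ∧
      α (conjPart ℓ α i + 1) < α (conjPart ℓ α i) ∧ α (conjPart ℓ α i) = i := by
  obtain ⟨j, hj, hjℓ, hlt, rfl⟩ := exists_descent_of_multPart_pos hα hsupp hi hm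
  rw [conjPart_apply_of_descent hα hjℓ hlt]
  exact ⟨hj, hjℓ, hlt, rfl⟩

theorem multPart_apply_pos {j : ℕ} (hj : 1 ≤ j) (hjℓ : j ≤ ℓ) :
    0 < multPart ℓ α (α j) :=
  Finset.card_pos.mpr ⟨j, by simp [hj, hjℓ]⟩

end PartitionConj

open PartitionConj in
theorem stmt14_general (ℓ : ℕ) (α : ℕ → ℕ)
    (hmono : ∀ i, 1 ≤ i → i < ℓ → α (i + 1) ≤ α i)
    (hsupp : ∀ i, ℓ < i → α i = 0)
    (heven : ∀ i, 1 ≤ i → i ≤ ℓ → Even (α i)) :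
    Set.BijOn (fun i => conjPart ℓ α i)
      {i : ℕ | 1 ≤ i ∧ Even i ∧ Even (conjPart ℓ α i) ∧ 0 < multPart ℓ α i}
      {j : ℕ | 1 ≤ j ∧ j ≤ ℓ ∧ Even j ∧ α (j + 1) < α j} ∧
    Set.InvOn (fun j => α j) (fun i => conjPart ℓ α i)
      {i : ℕ | 1 ≤ i ∧ Even i ∧ Even (conjPart ℓ α i) ∧ 0 < multPart ℓ α i}
      {j : ℕ | 1 ≤ j ∧ j ≤ ℓ ∧ Even j ∧ α (j + 1) < α j} := by
  have hα := antitoneOn_Ici_one hmono hsupp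
  have hinv : Set.InvOn (fun j => α j) (fun i => conjPart ℓ α i)
      {i : ℕ | 1 ≤ i ∧ Even i ∧ Even (conjPart ℓ α i) ∧ 0 < multPart ℓ α i}
      {j : ℕ | 1 ≤ j ∧ j ≤ ℓ ∧ Even j ∧ α (j + 1) < α j} :=
    ⟨fun i ⟨hi, _, _, hm⟩ => (descent_conjPart_of_multPart_pos hα hsupp hi hm).2.2.2,
      fun j ⟨_, hjℓ, _, hlt⟩ => conjPart_apply_of_descent hα hjℓ hlt⟩
  refine ⟨hinv.bijOn ?_ ?_, hinv⟩
  · rintro i ⟨hi, -, hconj, hm⟩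
    obtain ⟨hj, hjℓ, hlt, -⟩ := descent_conjPart_of_multPart_pos hα hsupp hi hm
    exact ⟨hj, hjℓ, hconj, hlt⟩
  · rintro j ⟨hj, hjℓ, hjeven, hlt⟩
    refine ⟨Nat.one_le_of_lt hlt, heven j hj hjℓ, ?_, multPart_apply_pos hj hjℓ⟩
    rwa [conjPart_apply_of_descent hα hjℓ hlt]

/-- let `α = (α_1 ≥ ⋯ ≥ α_ℓ > 0)` be a partition with all parts even.
Then `i ↦ α_i*` is a bijection from `{i ≥ 1 : i even, α_i* even, m_α(i) > 0}` onto
`{j : 1 ≤ j ≤ ℓ, j even, α_j > α_{j+1}}` (convention `α_{ℓ+1} = 0`), with inverse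
`j ↦ α_j`. -/
theorem stmt14 (ℓ : ℕ) (α : ℕ → ℕ)
    (hmono : ∀ i, 1 ≤ i → i < ℓ → α (i + 1) ≤ α i)
    (hpos : ∀ i, 1 ≤ i → i ≤ ℓ → 0 < α i)
    (hsupp : ∀ i, ℓ < i → α i = 0)
    (heven : ∀ i, 1 ≤ i → i ≤ ℓ → Even (α i)) :
    Set.BijOn (fun i => conjPart ℓ α i)
      {i : ℕ | 1 ≤ i ∧ Even i ∧ Even (conjPart ℓ α i) ∧ 0 < multPart ℓ α i}
      {j : ℕ | 1 ≤ j ∧ j ≤ ℓ ∧ Even j ∧ α (j + 1) < α j} ∧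
    Set.InvOn (fun j => α j) (fun i => conjPart ℓ α i)
      {i : ℕ | 1 ≤ i ∧ Even i ∧ Even (conjPart ℓ α i) ∧ 0 < multPart ℓ α i}
      {j : ℕ | 1 ≤ j ∧ j ≤ ℓ ∧ Even j ∧ α (j + 1) < α j} :=
  stmt14_general ℓ α hmono hsupp heven
end
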